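/- arXiv:1602.07374 — 6 statements merged into one kernel-verified Lean document; each statement's English description precedes it below -/
import Mathlib

section
/- The cube-connected cycles graph CC_n is isomorphic to Q_n(1,n), i.e., cube-connected cycles are recursive cubes of rings with d = 1 and r = n. -/
/-- The standard basis vector `e_j` of `F₂ⁿ`, with index taken in `ℤ_n`
(so `e_0 = e_n` etc.): the vector with a `1` exactly in the coordinates
`k` with `k ≡ j (mod n)`. -/
def Ebasis (n : ℕ) (j : ZMod n) : Fin n → ZMod 2 :=
  fun k => if ((k : ℕ) : ZMod n) = j then 1 else 0

/-- The adjacency rule of the recursive cube of rings `Q_n(d,r)`: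
`(a,x)` is joined to `(a, x+1)` (ring edges, symmetrized below) and to
`(a + e_{i+dx}, x)` for `1 ≤ i ≤ d` (cube edges). -/
def rcrRel (n d r : ℕ) (p q : (Fin n → ZMod 2) × ZMod r) : Prop :=
  (p.1 = q.1 ∧ q.2 = p.2 + 1) ∨
  (p.2 = q.2 ∧ ∃ i : ℕ, 1 ≤ i ∧ i ≤ d ∧
    q.1 = p.1 + Ebasis n ((i : ZMod n) + (d : ZMod n) * ((p.2.val : ℕ) : ZMod n)))

/-- The recursive cube of rings `Q_n(d,r)`, as a simple graph on
`ℤ₂ⁿ × ℤ_r` (the underlying set of `G = ℤ₂ⁿ ⋊_φ ℤ_r`). -/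
def RCR (n d r : ℕ) : SimpleGraph ((Fin n → ZMod 2) × ZMod r) :=
  SimpleGraph.fromRel (rcrRel n d r)

/-- Adjacency rule of the cube-connected cycles `CC_n`: on `ℤ₂ⁿ × ℤ_n`,
`(a,x)` is joined to `(a, x±1)` (symmetrization of `x+1`) and to
`(a + e_{1+x}, x)`. -/
def cccRel (n : ℕ) (p q : (Fin n → ZMod 2) × ZMod n) : Prop :=
  (p.1 = q.1 ∧ q.2 = p.2 + 1) ∨
  (p.2 = q.2 ∧ q.1 = p.1 + Ebasis n ((1 : ZMod n) + ((p.2.val : ℕ) : ZMod n)))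

/-- The cube-connected cycles graph `CC_n`. -/
def CCC (n : ℕ) : SimpleGraph ((Fin n → ZMod 2) × ZMod n) :=
  SimpleGraph.fromRel (cccRel n)

/-! For `d = 1` the only cube edge of `Q_n(1,n)` at `(a,x)` flips coordinate `1 + x`, which is
exactly the cube edge of `CC_n`, while the ring edges agree verbatim; so the identity map of
`ℤ₂ⁿ × ℤ_n` is an isomorphism. -/

lemma rcrRel_one_iff {n r : ℕ} {p q : (Fin n → ZMod 2) × ZMod r} :
    rcrRel n 1 r p q ↔ (p.1 = q.1 ∧ q.2 = p.2 + 1) ∨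
      (p.2 = q.2 ∧ q.1 = p.1 + Ebasis n (1 + ((p.2.val : ℕ) : ZMod n))) := by
  have index_eq_one : ∀ i : ℕ, 1 ≤ i ∧ i ≤ 1 ↔ i = 1 := fun i => by omega
  simp [rcrRel, ← and_assoc (a := 1 ≤ _), index_eq_one]

lemma cccRel_eq_rcrRel (n : ℕ) : cccRel n = rcrRel n 1 n := by
  ext p q
  rw [rcrRel_one_iff, cccRel]

lemma CCC_eq_RCR (n : ℕ) : CCC n = RCR n 1 n := by
  rw [CCC, RCR, cccRel_eq_rcrRel]

theorem stmt_5_general (n : ℕ) : Nonempty (CCC n ≃g RCR n 1 n) :=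
  ⟨CCC_eq_RCR n ▸ SimpleGraph.Iso.refl⟩

/-- `CC_n ≅ Q_n(1,n)`: cube-connected cycles are recursive cubes
of rings with `d = 1` and `r = n`. -/
theorem stmt_5 (n : ℕ) (hn : 2 ≤ n) : Nonempty (CCC n ≃g RCR n 1 n) :=
  stmt_5_general n
end

section
/- For any connected graph X, the bisection width satisfies bw(X) ≥ ⌊|V(X)|²/2⌋ / π(X). -/
/-!
For a bisection `U`, each of the `2|U||Ū|` ordered pairs separated by `U` is routed along a walk
that uses an edge of the cut `δ(U, Ū)`, while each edge carries at most `π(X)` routes; hence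
`2|U||Ū| ≤ |δ(U, Ū)| π(X)`. Since `|U|` and `|Ū|` differ by at most one, `2|U||Ū| ≥ ⌊n²/2⌋`.
-/

open Finset

theorem Finset.card_product_union_product_compl {α : Type*} [Fintype α] [DecidableEq α]
    (U : Finset α) : #(U ×ˢ Uᶜ ∪ Uᶜ ×ˢ U) = 2 * (#U * #Uᶜ) := by
  rw [card_union_of_disjoint (disjoint_product.2 (Or.inl disjoint_compl_right)), card_product,
    card_product]
  ring

theorem Nat.add_sq_div_two_le_two_mul {a b : ℕ} (ha : a ≤ b + 1) (hb : b ≤ a + 1) :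
    (a + b) ^ 2 / 2 ≤ 2 * (a * b) := by
  rw [Nat.div_le_iff_le_mul_add_pred two_pos]
  rcases (by omega : b = a ∨ b = a + 1 ∨ a = b + 1) with rfl | rfl | rfl <;> ring_nf <;> omega

namespace SimpleGraph

variable {V : Type*} {G : SimpleGraph V}

theorem Walk.exists_adj_mem_notMem_edges {u v : V} (w : G.Walk u v) {S : Set V}
    (h : (u ∈ S ∧ v ∉ S) ∨ (u ∉ S ∧ v ∈ S)) :
    ∃ a b, G.Adj a b ∧ a ∈ S ∧ b ∉ S ∧ s(a, b) ∈ w.edges := by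
  rcases h with ⟨hu, hv⟩ | ⟨hu, hv⟩
  · obtain ⟨d, hd, ha, hb⟩ := w.exists_boundary_dart S hu hv
    exact ⟨d.fst, d.snd, d.adj, ha, hb, List.mem_map_of_mem hd⟩
  · obtain ⟨d, hd, ha, hb⟩ := w.reverse.exists_boundary_dart S hv hu
    have he : d.edge ∈ w.reverse.edges := List.mem_map_of_mem hd
    rw [Walk.edges_reverse, List.mem_reverse] at he
    exact ⟨d.fst, d.snd, d.adj, ha, hb, he⟩

variable [Fintype V] [DecidableEq V]

noncomputable def edgeLoad (R : ∀ u v : V, G.Walk u v) (e : Sym2 V) : ℕ :=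
  Nat.card {p : V × V // p.1 ≠ p.2 ∧ e ∈ (R p.1 p.2).edges}

variable (G) in
noncomputable def cutSize (U : Finset V) : ℕ :=
  Nat.card {p : V × V // G.Adj p.1 p.2 ∧ p.1 ∈ U ∧ p.2 ∉ U}

theorem two_mul_card_mul_card_compl_le_cutSize_mul (R : ∀ u v : V, G.Walk u v) {m : ℕ}
    (hload : ∀ e, edgeLoad R e ≤ m) (U : Finset V) :
    2 * (#U * #Uᶜ) ≤ G.cutSize U * m := by
  classical
  rw [← card_product_union_product_compl]
  -- double count the pairs (separated pair `p`, cut edge on the route of `p`)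
  set cut : Finset (V × V) := {q | G.Adj q.1 q.2 ∧ q.1 ∈ U ∧ q.2 ∉ U}
  set cutEdges := cut.image fun q => s(q.1, q.2)
  have hcut : #cutEdges ≤ G.cutSize U := by
    rw [cutSize, Nat.card_eq_fintype_card, Fintype.card_subtype]
    exact card_image_le
  have hcross : ∀ p ∈ U ×ˢ Uᶜ ∪ Uᶜ ×ˢ U, 1 ≤
      #(cutEdges.bipartiteAbove (fun p e => e ∈ (R p.1 p.2).edges) p) := by
    rintro ⟨u, v⟩ hp
    simp only [mem_union, mem_product, mem_compl] at hp
    obtain ⟨a, b, hab, ha, hb, he⟩ := (R u v).exists_adj_mem_notMem_edges (S := U) hp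
    have hcutEdge : s(a, b) ∈ cutEdges :=
      mem_image_of_mem (fun q : V × V => s(q.1, q.2)) (mem_filter.2 ⟨mem_univ (a, b), hab, ha, hb⟩)
    exact card_pos.2 ⟨s(a, b), mem_filter.2 ⟨hcutEdge, he⟩⟩
  have hfiber : ∀ e ∈ cutEdges, #((U ×ˢ Uᶜ ∪ Uᶜ ×ˢ U).bipartiteBelow
      (fun p e => e ∈ (R p.1 p.2).edges) e) ≤ m := by
    intro e _
    calc #((U ×ˢ Uᶜ ∪ Uᶜ ×ˢ U).bipartiteBelow (fun p e => e ∈ (R p.1 p.2).edges) e)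
        ≤ #({p | p.1 ≠ p.2 ∧ e ∈ (R p.1 p.2).edges} : Finset (V × V)) := by
          refine card_le_card fun p hp => ?_
          simp only [bipartiteBelow, mem_filter, mem_union, mem_product, mem_compl] at hp
          simp only [mem_filter, mem_univ, true_and]
          exact ⟨fun h => by rw [h] at hp; tauto, hp.2⟩
      _ = edgeLoad R e := by rw [edgeLoad, Nat.card_eq_fintype_card, Fintype.card_subtype]
      _ ≤ m := hload e
  simpa using (card_mul_le_card_mul _ hcross hfiber).trans (Nat.mul_le_mul_right m hcut)

end SimpleGraph

theorem stmt_14_general {V : Type*} [Fintype V] [DecidableEq V] (X : SimpleGraph V)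
    (piX : ℕ)
    (hpi : IsLeast {m : ℕ | ∃ R : ∀ u v : V, X.Walk u v,
        (∀ u v, (R u v).IsPath) ∧
        ∀ e : Sym2 V,
          Nat.card {p : V × V // p.1 ≠ p.2 ∧ e ∈ (R p.1 p.2).edges} ≤ m} piX)
    (bwX : ℕ)
    (hbw : IsLeast {c : ℕ | ∃ U : Finset V,
        (U.card ≤ Uᶜ.card + 1 ∧ Uᶜ.card ≤ U.card + 1) ∧
        c = Nat.card {p : V × V // X.Adj p.1 p.2 ∧ p.1 ∈ U ∧ p.2 ∉ U}} bwX) :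
    Fintype.card V ^ 2 / 2 ≤ bwX * piX := by
  obtain ⟨R, -, hload⟩ := hpi.1
  obtain ⟨U, ⟨hU, hUc⟩, rfl⟩ := hbw.1
  calc Fintype.card V ^ 2 / 2 = (#U + #Uᶜ) ^ 2 / 2 := by rw [card_add_card_compl]
    _ ≤ 2 * (#U * #Uᶜ) := Nat.add_sq_div_two_le_two_mul hU hUc
    _ ≤ X.cutSize U * piX := X.two_mul_card_mul_card_compl_le_cutSize_mul R hload U

/-- for a connected graph `X`,
`bw(X) ≥ ⌊|V(X)|²/2⌋ / π(X)`, stated multiplicatively as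
`bw(X)·π(X) ≥ ⌊|V(X)|²/2⌋`.  Here `π(X)` is the edge-forwarding index (the
least `m` such that some routing by paths loads every edge at most `m` times)
and `bw(X)` is the bisection width (the least size of a cut `δ(U,Ū)` over
partitions with `||U| − |Ū|| ≤ 1`). -/
theorem stmt_14 {V : Type*} [Fintype V] [DecidableEq V] (X : SimpleGraph V)
    (hconn : X.Connected)
    (piX : ℕ)
    (hpi : IsLeast {m : ℕ | ∃ R : ∀ u v : V, X.Walk u v,
        (∀ u v, (R u v).IsPath) ∧
        ∀ e : Sym2 V,
          Nat.card {p : V × V // p.1 ≠ p.2 ∧ e ∈ (R p.1 p.2).edges} ≤ m} piX)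
    (bwX : ℕ)
    (hbw : IsLeast {c : ℕ | ∃ U : Finset V,
        (U.card ≤ Uᶜ.card + 1 ∧ Uᶜ.card ≤ U.card + 1) ∧
        c = Nat.card {p : V × V // X.Adj p.1 p.2 ∧ p.1 ∈ U ∧ p.2 ∉ U}} bwX) :
    Fintype.card V ^ 2 / 2 ≤ bwX * piX :=
  stmt_14_general X piX hpi bwX hbw
end

section
/- Let dr ≡ 0 (mod n), r ≥ 3. Let U = {(a,x) : aₙ = 1} and Ū = {(a,x) : aₙ = 0} in Q_n(d,r). Then {U, Ū} is a bisection and |δ(U,Ū)| = 2^{n−1}·dr/n; hence bw(Q_n(d,r)) ≤ 2^{n−1}·dr/n. -/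
open Finset

open Classical in
/-- The ring positions `x` with `j ∈ D(x)`, i.e. carrying cube edges in direction `e_j`. -/
noncomputable def cubeDirPositions (n d r : ℕ) [NeZero r] (j : ZMod n) : Finset (ZMod r) :=
  univ.filter fun x => ∃ i : ℕ, 1 ≤ i ∧ i ≤ d ∧
    (i : ZMod n) + (d : ZMod n) * ((x.val : ℕ) : ZMod n) = j

lemma card_filter_range_natCast_succ_eq {n N : ℕ} [NeZero n] (hN : n ∣ N) (j : ZMod n) :
    #((range N).filter fun t => ((t + 1 : ℕ) : ZMod n) = j) = N / n := by
  have hcongr : ∀ t, ((t + 1 : ℕ) : ZMod n) = j ↔ t ≡ (j - 1).val [MOD n] := fun t => by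
    rw [← ZMod.natCast_eq_natCast_iff, ZMod.natCast_zmod_val, eq_sub_iff_add_eq, Nat.cast_succ]
  rw [filter_congr fun t _ => hcongr t, ← Nat.count_eq_card_filter_range,
    Nat.count_modEq_card _ (NeZero.pos n), Nat.mod_eq_zero_of_dvd hN]
  simp

lemma Nat.eq_of_div_eq_of_modEq {d n t t' : ℕ} (hd : 0 < d) (hdn : d ≤ n)
    (hdiv : t / d = t' / d) (hmod : t ≡ t' [MOD n]) : t = t' := by
  have hrem : t % d ≡ t' % d [MOD n] := by
    rw [← Nat.mod_add_div t d, ← Nat.mod_add_div t' d, hdiv] at hmod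
    exact Nat.ModEq.add_right_cancel' _ hmod
  have := hrem.eq_of_lt_of_lt ((Nat.mod_lt t hd).trans_le hdn) ((Nat.mod_lt t' hd).trans_le hdn)
  rw [← Nat.mod_add_div t d, ← Nat.mod_add_div t' d, this, hdiv]

lemma image_div_eq_cubeDirPositions {n d r : ℕ} [NeZero r] (j : ZMod n) :
    ((range (d * r)).filter fun t => ((t + 1 : ℕ) : ZMod n) = j).image
      (fun t => ((t / d : ℕ) : ZMod r)) = cubeDirPositions n d r j := by
  ext x
  simp only [cubeDirPositions, mem_image, mem_filter, mem_range, mem_univ, true_and]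
  constructor
  · rintro ⟨t, ⟨ht, htj⟩, rfl⟩
    have hd : 0 < d := Nat.pos_of_ne_zero (by rintro rfl; simp at ht)
    refine ⟨t % d + 1, by omega, Nat.mod_lt t hd, ?_⟩
    rw [ZMod.val_cast_of_lt (Nat.div_lt_of_lt_mul ht), ← htj]
    conv_rhs => rw [← Nat.mod_add_div t d]
    push_cast
    ring
  · rintro ⟨i, hi1, hid, hij⟩
    have hx : d * (x.val + 1) ≤ d * r := Nat.mul_le_mul_left d (ZMod.val_lt x)
    refine ⟨i - 1 + d * x.val, ⟨by rw [mul_add] at hx; omega, ?_⟩, ?_⟩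
    · rw [show i - 1 + d * x.val + 1 = i + d * x.val by omega, ← hij]
      push_cast
      ring
    · rw [Nat.add_mul_div_left _ _ (by omega), Nat.div_eq_of_lt (by omega), zero_add,
        ZMod.natCast_zmod_val]

theorem card_cubeDirPositions {n d r : ℕ} [NeZero n] [NeZero r] (hdn : d ≤ n)
    (hmod : n ∣ d * r) (j : ZMod n) :
    #(cubeDirPositions n d r j) = d * r / n := by
  have hinj : Set.InjOn (fun t => ((t / d : ℕ) : ZMod r))
      ((range (d * r)).filter fun t => ((t + 1 : ℕ) : ZMod n) = j) := by
    intro t ht t' ht' htt'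
    simp only [coe_filter, mem_range, Set.mem_ofPred_eq] at ht ht'
    have hdiv : t / d = t' / d := by
      simpa [ZMod.val_cast_of_lt (Nat.div_lt_of_lt_mul ht.1),
        ZMod.val_cast_of_lt (Nat.div_lt_of_lt_mul ht'.1)] using congrArg ZMod.val htt'
    have hd : 0 < d := Nat.pos_of_ne_zero (by rintro rfl; simp at ht)
    refine Nat.eq_of_div_eq_of_modEq hd hdn hdiv (Nat.ModEq.add_right_cancel' 1 ?_)
    exact (ZMod.natCast_eq_natCast_iff _ _ _).1 (ht.2.trans ht'.2.symm)
  rw [← image_div_eq_cubeDirPositions, card_image_of_injOn hinj,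
    card_filter_range_natCast_succ_eq hmod]

lemma card_filter_apply_eq {ι β : Type*} [Fintype ι] [DecidableEq ι] [Fintype β] [DecidableEq β]
    (k : ι) (b : β) :
    #(univ.filter fun a : ι → β => a k = b) = Fintype.card β ^ (Fintype.card ι - 1) := by
  simpa using Fintype.card_filter_piFinset_const_eq_of_mem (univ : Finset β) k (mem_univ b)

lemma card_filter_fst_apply_eq {ι β R : Type*} [Fintype ι] [DecidableEq ι] [Fintype β]
    [DecidableEq β] [Fintype R] (k : ι) (b : β) :
    #(univ.filter fun p : (ι → β) × R => p.1 k = b) =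
      Fintype.card β ^ (Fintype.card ι - 1) * Fintype.card R := by
  have hprod : univ.filter (fun p : (ι → β) × R => p.1 k = b) =
      (univ.filter fun a : ι → β => a k = b) ×ˢ univ := by
    ext; simp
  rw [hprod, card_product, card_filter_apply_eq, card_univ]

theorem card_filter_fst_apply_eq_one_eq_card_compl {ι R : Type*} [Fintype ι] [DecidableEq ι]
    [Fintype R] [DecidableEq R] (k : ι) :
    #(univ.filter fun p : (ι → ZMod 2) × R => p.1 k = 1) =
      #(univ.filter fun p : (ι → ZMod 2) × R => p.1 k = 1)ᶜ := by
  have hne : ∀ b : ZMod 2, ¬b = 1 ↔ b = 0 := by decide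
  simp only [compl_filter, hne]
  rw [card_filter_fst_apply_eq, card_filter_fst_apply_eq]

noncomputable def cutCard {V : Type*} (G : SimpleGraph V) (W : Finset V) : ℕ :=
  Nat.card {e : V × V // G.Adj e.1 e.2 ∧ e.1 ∈ W ∧ e.2 ∉ W}

section Cut

variable {n d r : ℕ}

lemma Ebasis_apply_self (k : Fin n) : Ebasis n ((k : ℕ) : ZMod n) k = 1 := if_pos rfl

lemma eq_of_add_Ebasis_apply_ne {a : Fin n → ZMod 2} {j : ZMod n} {k : Fin n}
    (h : (a + Ebasis n j) k ≠ a k) : ((k : ℕ) : ZMod n) = j := by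
  by_contra hkj
  simp [Ebasis, hkj] at h

theorem rcr_adj_iff_of_apply_eq_one_of_apply_ne_one [NeZero r] {k : Fin n}
    {p q : (Fin n → ZMod 2) × ZMod r} (hp : p.1 k = 1) (hq : q.1 k ≠ 1) :
    (RCR n d r).Adj p q ↔
      p.2 ∈ cubeDirPositions n d r k ∧ q = (p.1 + Ebasis n k, p.2) := by
  have hpq : p.1 k ≠ q.1 k := hp ▸ Ne.symm hq
  rw [RCR, SimpleGraph.fromRel_adj]
  constructor
  · rintro ⟨-, (⟨h1, -⟩ | ⟨h2, i, hi1, hid, hqi⟩) | (⟨h1, -⟩ | ⟨h2, i, hi1, hid, hpi⟩)⟩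
    · exact absurd (congrFun h1 k) hpq
    · have hk := eq_of_add_Ebasis_apply_ne (hqi ▸ hpq.symm)
      refine ⟨?_, Prod.ext (by rw [hqi, hk]) h2.symm⟩
      simp only [cubeDirPositions, mem_filter, mem_univ, true_and]
      exact ⟨i, hi1, hid, hk.symm⟩
    · exact absurd (congrFun h1 k) hpq.symm
    · have hk := eq_of_add_Ebasis_apply_ne (hpi ▸ hpq)
      rw [h2] at hpi hk
      refine ⟨?_, Prod.ext ?_ h2⟩
      · simp only [cubeDirPositions, mem_filter, mem_univ, true_and]
        exact ⟨i, hi1, hid, hk.symm⟩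
      · rw [hpi, ← hk, add_assoc, ZModModule.add_self, add_zero]
  · rintro ⟨hx, rfl⟩
    simp only [cubeDirPositions, mem_filter, mem_univ, true_and] at hx
    obtain ⟨i, hi1, hid, hij⟩ := hx
    exact ⟨fun h => hpq (congrFun (congrArg Prod.fst h) k),
      Or.inl (Or.inr ⟨rfl, i, hi1, hid, by rw [hij]⟩)⟩

theorem cutCard_rcr [NeZero r] (k : Fin n) :
    cutCard (RCR n d r) (univ.filter fun p => p.1 k = 1) =
      2 ^ (n - 1) * #(cubeDirPositions n d r k) := by
  let W : Finset ((Fin n → ZMod 2) × ZMod r) := univ.filter fun p => p.1 k = 1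
  have hW : ∀ p, p ∈ W ↔ p.1 k = 1 := by simp [W]
  have cutEquiv : {e : ((Fin n → ZMod 2) × ZMod r) × ((Fin n → ZMod 2) × ZMod r) //
      (RCR n d r).Adj e.1 e.2 ∧ e.1 ∈ W ∧ e.2 ∉ W} ≃
      {a : Fin n → ZMod 2 // a k = 1} × cubeDirPositions n d r k :=
    { toFun := fun e => (⟨e.1.1.1, (hW _).1 e.2.2.1⟩,
        ⟨e.1.1.2, ((rcr_adj_iff_of_apply_eq_one_of_apply_ne_one ((hW _).1 e.2.2.1)
          (mt (hW _).2 e.2.2.2)).1 e.2.1).1⟩)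
      invFun := fun ax => ⟨((ax.1.1, ax.2.1), (ax.1.1 + Ebasis n k, ax.2.1)), by
        have hflip : (ax.1.1 + Ebasis n k) k ≠ 1 := by
          rw [Pi.add_apply, ax.1.2, Ebasis_apply_self]; decide
        exact ⟨(rcr_adj_iff_of_apply_eq_one_of_apply_ne_one ax.1.2 hflip).2 ⟨ax.2.2, rfl⟩,
          (hW _).2 ax.1.2, mt (hW _).1 hflip⟩⟩
      left_inv := fun e => by
        obtain ⟨⟨p, q⟩, hadj, hp, hq⟩ := e
        obtain ⟨-, hq'⟩ :=
          (rcr_adj_iff_of_apply_eq_one_of_apply_ne_one ((hW _).1 hp) (mt (hW _).2 hq)).1 hadj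
        exact Subtype.ext (Prod.ext rfl hq'.symm)
      right_inv := fun _ => rfl }
  rw [cutCard, Nat.card_congr cutEquiv, Nat.card_prod, Nat.card_eq_fintype_card,
    Fintype.card_subtype, card_filter_apply_eq, Nat.card_eq_finsetCard, ZMod.card,
    Fintype.card_fin]

end Cut

/-- for `r ≥ 3` and `dr ≡ 0 (mod n)`, the partition of the
vertices of `Q_n(d,r)` by the value of the `n`-th coordinate `aₙ` is a
bisection whose cut has exactly `2^{n−1}·dr/n` edges; hence
`bw(Q_n(d,r)) ≤ 2^{n−1}·dr/n`.  (The cut edges are counted as ordered pairs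
`(p₁, p₂)` with `p₁ ∈ U`, `p₂ ∉ U`, one per edge.) -/
theorem stmt_15 (n d r : ℕ) [NeZero r] (hn : 2 ≤ n) (hdn : d ≤ n)
    (hmod : (d * r) % n = 0)
    (U : Finset ((Fin n → ZMod 2) × ZMod r))
    (hU : U = Finset.univ.filter
      (fun p : (Fin n → ZMod 2) × ZMod r => p.1 ⟨n - 1, by omega⟩ = 1))
    (bwX : ℕ)
    (hbw : IsLeast {c : ℕ | ∃ W : Finset ((Fin n → ZMod 2) × ZMod r),
        (W.card ≤ Wᶜ.card + 1 ∧ Wᶜ.card ≤ W.card + 1) ∧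
        c = Nat.card {p : ((Fin n → ZMod 2) × ZMod r) × ((Fin n → ZMod 2) × ZMod r) //
          (RCR n d r).Adj p.1 p.2 ∧ p.1 ∈ W ∧ p.2 ∉ W}} bwX) :
    U.card = Uᶜ.card ∧
    Nat.card {p : ((Fin n → ZMod 2) × ZMod r) × ((Fin n → ZMod 2) × ZMod r) //
        (RCR n d r).Adj p.1 p.2 ∧ p.1 ∈ U ∧ p.2 ∉ U} = 2 ^ (n - 1) * (d * r / n) ∧
    bwX ≤ 2 ^ (n - 1) * (d * r / n) := by
  have : NeZero n := ⟨by omega⟩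
  have hbal : U.card = Uᶜ.card := hU ▸ card_filter_fst_apply_eq_one_eq_card_compl _
  have hcut : cutCard (RCR n d r) U = 2 ^ (n - 1) * (d * r / n) := by
    rw [hU, cutCard_rcr, card_cubeDirPositions hdn (Nat.dvd_of_mod_eq_zero hmod)]
  exact ⟨hbal, hcut, hbw.2 ⟨U, ⟨by omega, by omega⟩, hcut.symm⟩⟩
end

section
/- Let dr = n (so r = n/d) and r ≥ 3. The diameter of Q_n(d,r) equals n + r if r = 3, and n + ⌊3r/2⌋ − 2 if r ≥ 4. -/
/-!
At ring position `x` one may flip exactly the coordinates `i + d x` (`1 ≤ i ≤ d`) of `ℤ_n`; since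
`n = dr` these blocks partition the coordinates, and a walk must pass through the block of every
coordinate in which its endpoints differ.

Upper bound: sweep `r - 1` consecutive ring positions, flipping each wrong coordinate when its
block is reached, after first backing up so that the sweep ends at the target position. With
`Δ` the ring offset of the target, backing up `Δ - 1` steps and sweeping backwards, or `r - 1 - Δ`
steps and sweeping forwards, costs at most `n + ⌊3r/2⌋ - 2`; for `Δ = 0` a full turn costs `n + r`.

Lower bound, for `(0, 0)` and `(1, ⌊r/2⌋)` (`(1, 0)` if `r = 3`): lift the ring moves of a walk to
`ℤ`. The lifted path visits all `r` residues, so it spans an interval `[m, M]` with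
`M - m ≥ r - 1`, and it ends at some `e` congruent to the target position. Starting at `0`,
reaching `M` and `m` and ending at `e` takes at least `max (|e|, 2 (M - m) - |e|)` ring moves,
which is at least `⌊3r/2⌋ - 2` (resp. `r`); the `n` flips come on top.
-/

theorem hammingDist_add_hammingDist_piecewise {ι : Type*} {β : ι → Type*} [Fintype ι]
    [DecidableEq ι] [∀ i, DecidableEq (β i)] (s : Finset ι) (x y : ∀ i, β i) :
    hammingDist x (s.piecewise y x) + hammingDist (s.piecewise y x) y = hammingDist x y := by
  simp only [hammingDist]
  rw [← Finset.card_filter_add_card_filter_not (s := Finset.univ.filter fun i => x i ≠ y i)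
    (fun i => i ∈ s)]
  congr 2 <;> ext i <;> by_cases hi : i ∈ s <;> simp [hi]

theorem ZMod.le_sub_add_one_of_surjOn {r : ℕ} [NeZero r] {m M : ℤ}
    (h : Set.SurjOn ((↑) : ℤ → ZMod r) (Set.Icc m M) Set.univ) : (r : ℤ) ≤ M - m + 1 := by
  have := Finset.card_le_card_of_surjOn (t := (Finset.univ : Finset (ZMod r)))
    (s := Finset.Icc m M) _ (by rwa [Finset.coe_Icc, Finset.coe_univ])
  rw [Finset.card_univ, ZMod.card, Int.card_Icc] at this
  have := NeZero.pos r
  omega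

namespace List

def maxPrefixSum : List ℤ → ℤ
  | [] => 0
  | s :: l => max 0 (s + maxPrefixSum l)

def minPrefixSum : List ℤ → ℤ
  | [] => 0
  | s :: l => min 0 (s + minPrefixSum l)

theorem minPrefixSum_le_sum_le_maxPrefixSum (l : List ℤ) :
    l.minPrefixSum ≤ 0 ∧ l.minPrefixSum ≤ l.sum ∧ l.sum ≤ l.maxPrefixSum ∧ 0 ≤ l.maxPrefixSum := by
  induction l with
  | nil => simp [minPrefixSum, maxPrefixSum]
  | cons s l ih => simp only [minPrefixSum, maxPrefixSum, sum_cons]; omega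

theorem natAbs_sum_le_sum_natAbs (l : List ℤ) : l.sum.natAbs ≤ (l.map Int.natAbs).sum := by
  induction l with
  | nil => simp
  | cons s l ih => simp only [sum_cons, map_cons]; omega

theorem two_mul_sub_minPrefixSum_le (l : List ℤ) :
    2 * (l.maxPrefixSum - l.minPrefixSum) ≤ ((l.map Int.natAbs).sum : ℤ) + l.sum.natAbs := by
  induction l with
  | nil => simp [minPrefixSum, maxPrefixSum]
  | cons s l ih =>
    have := minPrefixSum_le_sum_le_maxPrefixSum l
    have := natAbs_sum_le_sum_natAbs l
    simp only [minPrefixSum, maxPrefixSum, sum_cons, map_cons]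
    omega

end List

namespace RCR

variable {n d r : ℕ}

def block (d r : ℕ) (k : Fin n) : ZMod r := ((((k : ℕ) : ZMod n) - 1).val / d : ℕ)

theorem Ebasis_natCast (k : Fin n) : Ebasis n ((k : ℕ) : ZMod n) = Pi.single k 1 := by
  ext k'
  simp only [Ebasis, Pi.single_apply, ZMod.natCast_eq_natCast_iff', Nat.mod_eq_of_lt k'.isLt,
    Nat.mod_eq_of_lt k.isLt, Fin.val_inj]

theorem block_eq_iff (hd : 0 < d) (hdr : d * r = n) {k : Fin n} {x : ZMod r} :
    block d r k = x ↔
      ∃ i : ℕ, 1 ≤ i ∧ i ≤ d ∧ ((k : ℕ) : ZMod n) = i + d * ((x.val : ℕ) : ZMod n) := by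
  have : NeZero n := ⟨by have := k.pos; omega⟩
  have : NeZero r := ⟨right_ne_zero_of_mul (hdr ▸ NeZero.ne n)⟩
  constructor
  · rintro rfl
    set m := (((k : ℕ) : ZMod n) - 1).val
    have hm : m < d * r := hdr ▸ ZMod.val_lt _
    have hmr : m / d < r := Nat.div_lt_of_lt_mul hm
    refine ⟨m % d + 1, by omega, Nat.mod_lt _ hd, ?_⟩
    rw [block, ZMod.val_natCast, Nat.mod_eq_of_lt hmr]
    have hsplit : ((m % d + 1 : ℕ) : ZMod n) + d * ((m / d : ℕ) : ZMod n) = (m : ZMod n) + 1 := by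
      have h := Nat.mod_add_div m d
      exact_mod_cast congrArg (Nat.cast : ℕ → ZMod n) (by omega : m % d + 1 + d * (m / d) = m + 1)
    rw [hsplit, ZMod.natCast_zmod_val]; ring
  · rintro ⟨i, hi1, hid, hk⟩
    have hx := x.val_lt
    have hlt : i - 1 + d * x.val < n := by
      have := Nat.mul_le_mul_left d hx; rw [Nat.mul_succ] at this; omega
    have : ((k : ℕ) : ZMod n) - 1 = ((i - 1 + d * x.val : ℕ) : ZMod n) := by
      rw [hk]; push_cast [Nat.cast_sub hi1]; ring
    rw [block, this, ZMod.val_natCast, Nat.mod_eq_of_lt hlt, Nat.add_mul_div_left _ _ hd,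
      Nat.div_eq_of_lt (by omega), zero_add, ZMod.natCast_zmod_val]

def ringStep (x y : ZMod r) : ℤ := if y = x + 1 then 1 else if x = y + 1 then -1 else 0

def ringSteps {α : Type*} {G : SimpleGraph (α × ZMod r)} {u v : α × ZMod r} (w : G.Walk u v) :
    List ℤ :=
  w.darts.map fun e => ringStep e.fst.2 e.snd.2

@[simp]
theorem ringSteps_nil {α : Type*} {G : SimpleGraph (α × ZMod r)} {u : α × ZMod r} :
    ringSteps (SimpleGraph.Walk.nil : G.Walk u u) = [] := rfl

@[simp]
theorem ringSteps_cons {α : Type*} {G : SimpleGraph (α × ZMod r)} {u v w : α × ZMod r}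
    (h : G.Adj u v) (p : G.Walk v w) :
    ringSteps (.cons h p) = ringStep u.2 v.2 :: ringSteps p := rfl

section

variable (hd : 0 < d) (hr : 1 < r) (hdr : d * r = n)
include hd hr hdr

theorem exists_Ebasis_iff {a b : Fin n → ZMod 2} {x : ZMod r} :
    (∃ i : ℕ, 1 ≤ i ∧ i ≤ d ∧ b = a + Ebasis n (i + d * ((x.val : ℕ) : ZMod n))) ↔
      ∃ k, block d r k = x ∧ b = a + Pi.single k 1 := by
  have : NeZero n := ⟨by nlinarith⟩
  constructor
  · rintro ⟨i, hi1, hid, rfl⟩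
    set j : ZMod n := i + d * ((x.val : ℕ) : ZMod n)
    have hj : (((⟨j.val, j.val_lt⟩ : Fin n) : ℕ) : ZMod n) = j := ZMod.natCast_zmod_val j
    exact ⟨⟨j.val, j.val_lt⟩, (block_eq_iff hd hdr).2 ⟨i, hi1, hid, hj⟩, by
      rw [← Ebasis_natCast, hj]⟩
  · rintro ⟨k, hk, rfl⟩
    obtain ⟨i, hi1, hid, hik⟩ := (block_eq_iff hd hdr).1 hk
    exact ⟨i, hi1, hid, by rw [← hik, Ebasis_natCast]⟩

theorem adj_iff {p q : (Fin n → ZMod 2) × ZMod r} :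
    (RCR n d r).Adj p q ↔
      (p.1 = q.1 ∧ (q.2 = p.2 + 1 ∨ p.2 = q.2 + 1)) ∨
        (p.2 = q.2 ∧ ∃ k, block d r k = p.2 ∧ q.1 = p.1 + Pi.single k 1) := by
  have : Fact (1 < r) := ⟨hr⟩
  have hflip : ∀ {a b : Fin n → ZMod 2} {k}, b = a + Pi.single k 1 ↔ a = b + Pi.single k 1 := by
    intro a b k
    constructor <;> rintro rfl <;> ext i <;> simp [add_assoc, CharTwo.add_self_eq_zero]
  simp only [RCR, SimpleGraph.fromRel_adj, rcrRel, exists_Ebasis_iff hd hr hdr]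
  constructor
  · rintro ⟨-, (⟨h1, h2⟩ | ⟨h1, k, hk, h2⟩) | (⟨h1, h2⟩ | ⟨h1, k, hk, h2⟩)⟩
    · exact .inl ⟨h1, .inl h2⟩
    · exact .inr ⟨h1, k, hk, h2⟩
    · exact .inl ⟨h1.symm, .inr h2⟩
    · exact .inr ⟨h1.symm, k, h1 ▸ hk, hflip.2 h2⟩
  · rintro (⟨h1, h2 | h2⟩ | ⟨h1, k, hk, h2⟩)
    · refine ⟨fun h => ?_, .inl (.inl ⟨h1, h2⟩)⟩
      simp [h] at h2
    · refine ⟨fun h => ?_, .inr (.inl ⟨h1.symm, h2⟩)⟩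
      simp [h] at h2
    · refine ⟨fun h => ?_, .inl (.inr ⟨h1, k, hk, h2⟩)⟩
      simpa [h] using congrFun h2 k

theorem block_surjective : Function.Surjective (block d r : Fin n → ZMod r) := by
  have : NeZero n := ⟨by nlinarith⟩
  intro x
  set j : ZMod n := (1 : ℕ) + d * ((x.val : ℕ) : ZMod n)
  exact ⟨⟨j.val, j.val_lt⟩, (block_eq_iff hd hdr).2 ⟨1, le_rfl, hd, ZMod.natCast_zmod_val j⟩⟩

theorem edist_flip_le {k : Fin n} {x : ZMod r} (hk : block d r k = x) (a : Fin n → ZMod 2) :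
    (RCR n d r).edist (a, x) (a + Pi.single k 1, x) ≤ 1 :=
  SimpleGraph.edist_le_one_iff_adj_or_eq.2 (.inl ((adj_iff hd hr hdr).2 (.inr ⟨rfl, k, hk, rfl⟩)))

theorem edist_step_le {ε : ZMod r} (hε : ε = 1 ∨ ε = -1) (a : Fin n → ZMod 2) (x : ZMod r) :
    (RCR n d r).edist (a, x) (a, x + ε) ≤ 1 := by
  refine SimpleGraph.edist_le_one_iff_adj_or_eq.2 (.inl ((adj_iff hd hr hdr).2 (.inl ⟨rfl, ?_⟩)))
  rcases hε with rfl | rfl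
  · exact .inl rfl
  · exact .inr (by ring)

theorem edist_le_hammingDist {a b : Fin n → ZMod 2} {x : ZMod r}
    (hblock : ∀ k, a k ≠ b k → block d r k = x) :
    (RCR n d r).edist (a, x) (b, x) ≤ hammingDist a b := by
  induction hab : hammingDist a b using Nat.strong_induction_on generalizing a with
  | _ m ih =>
  by_cases heq : a = b
  · subst heq; simp
  obtain ⟨k, hk⟩ : ∃ k, a k ≠ b k := Function.ne_iff.1 heq
  set a' := ({k} : Finset (Fin n)).piecewise b a
  have ha' : a' = a + Pi.single k 1 := by
    ext i
    by_cases hi : i = k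
    · subst hi
      have : ∀ s t : ZMod 2, s ≠ t → t = s + 1 := by decide
      simpa [a'] using this _ _ hk
    · simp [a', hi]
  have hsplit : hammingDist a a' + hammingDist a' b = m :=
    hab ▸ hammingDist_add_hammingDist_piecewise {k} a b
  have hpos : 0 < hammingDist a a' :=
    hammingDist_pos.2 fun h => hk ((congrFun h k).trans (by simp [a']))
  have hblock' : ∀ i, a' i ≠ b i → block d r i = x := by
    intro i hi
    by_cases hik : i = k
    · simp [a', hik] at hi
    · exact hblock i (by simpa [a', hik] using hi)
  calc (RCR n d r).edist (a, x) (b, x)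
      ≤ (RCR n d r).edist (a, x) (a', x) + (RCR n d r).edist (a', x) (b, x) :=
        SimpleGraph.edist_triangle
    _ ≤ 1 + hammingDist a' b :=
        add_le_add (ha' ▸ edist_flip_le hd hr hdr (hblock k hk) a)
          (ih _ (by omega) hblock' rfl)
    _ ≤ m := by norm_cast; omega

theorem edist_sweep_le {ε : ZMod r} (hε : ε = 1 ∨ ε = -1) {a b : Fin n → ZMod 2} {x : ZMod r}
    {t : ℕ} (hcover : ∀ k, a k ≠ b k → ∃ s ≤ t, block d r k = x + s * ε) :
    (RCR n d r).edist (a, x) (b, x + t * ε) ≤ hammingDist a b + t := by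
  induction t generalizing a x with
  | zero =>
    simpa using edist_le_hammingDist hd hr hdr fun k hk => by simpa using hcover k hk
  | succ t ih =>
    set b₁ := (Finset.univ.filter fun k => block d r k = x).piecewise b a
    have hsplit := hammingDist_add_hammingDist_piecewise
      (Finset.univ.filter fun k => block d r k = x) a b
    have hcover₁ : ∀ k, b₁ k ≠ b k → ∃ s ≤ t, block d r k = x + ε + s * ε := by
      intro k hk
      have hkx : block d r k ≠ x := fun h => hk (by simp [b₁, h])
      obtain ⟨s, hst, hs⟩ := hcover k (by simpa [b₁, hkx] using hk)
      obtain ⟨s, rfl⟩ : ∃ s', s = s' + 1 := Nat.exists_eq_succ_of_ne_zero fun h => hkx (by simp_all)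
      exact ⟨s, by omega, by rw [hs]; push_cast; ring⟩
    have hflips : (RCR n d r).edist (a, x) (b₁, x) ≤ hammingDist a b₁ :=
      edist_le_hammingDist hd hr hdr fun k hk => by
        by_contra hkx
        simp [b₁, hkx] at hk
    have hend : x + ((t + 1 : ℕ) : ZMod r) * ε = x + ε + t * ε := by push_cast; ring
    rw [hend]
    calc (RCR n d r).edist (a, x) (b, x + ε + t * ε)
        ≤ (RCR n d r).edist (a, x) (b₁, x) + ((RCR n d r).edist (b₁, x) (b₁, x + ε) +
            (RCR n d r).edist (b₁, x + ε) (b, x + ε + t * ε)) :=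
          SimpleGraph.edist_triangle.trans (add_le_add_right SimpleGraph.edist_triangle _)
      _ ≤ hammingDist a b₁ + (1 + (hammingDist b₁ b + t)) :=
          add_le_add hflips (add_le_add (edist_step_le hd hr hdr hε b₁ x) (ih hcover₁))
      _ = hammingDist a b + (t + 1 : ℕ) := by
          rw [← hsplit]; push_cast; ring

theorem edist_full_sweep_le {ε : ZMod r} (hε : ε = 1 ∨ ε = -1) {t : ℕ} (ht : r - 1 ≤ t)
    (a b : Fin n → ZMod 2) (x : ZMod r) :
    (RCR n d r).edist (a, x) (b, x + t * ε) ≤ hammingDist a b + t := by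
  have : NeZero r := ⟨by omega⟩
  have hεε : ε * ε = 1 := by rcases hε with rfl | rfl <;> simp
  refine edist_sweep_le hd hr hdr hε fun k _ => ⟨((block d r k - x) * ε).val, ?_, ?_⟩
  · have := ZMod.val_lt ((block d r k - x) * ε); omega
  · rw [ZMod.natCast_zmod_val, mul_assoc, hεε]; ring

theorem edist_turn_sweep_le {ε : ZMod r} (hε : ε = 1 ∨ ε = -1) (s : ℕ) (a b : Fin n → ZMod 2)
    (x : ZMod r) :
    (RCR n d r).edist (a, x) (b, x - s * ε + (r - 1 : ℕ) * ε) ≤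
      hammingDist a b + s + (r - 1 : ℕ) := by
  have hback : (RCR n d r).edist (a, x) (a, x - s * ε) ≤ s := by
    have hε' : -ε = 1 ∨ -ε = -1 := by rcases hε with rfl | rfl <;> simp
    have := edist_sweep_le hd hr hdr hε' (a := a) (b := a) (x := x) (t := s) (by simp)
    simpa [← sub_eq_add_neg] using this
  calc (RCR n d r).edist (a, x) (b, x - s * ε + (r - 1 : ℕ) * ε)
      ≤ (RCR n d r).edist (a, x) (a, x - s * ε) +
          (RCR n d r).edist (a, x - s * ε) (b, x - s * ε + (r - 1 : ℕ) * ε) :=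
        SimpleGraph.edist_triangle
    _ ≤ s + (hammingDist a b + (r - 1 : ℕ)) :=
        add_le_add hback (edist_full_sweep_le hd hr hdr hε le_rfl a b _)
    _ = hammingDist a b + s + (r - 1 : ℕ) := by ring

theorem snd_eq_add_ringStep_of_adj {p q : (Fin n → ZMod 2) × ZMod r} (h : (RCR n d r).Adj p q) :
    q.2 = p.2 + ringStep p.2 q.2 := by
  have : Fact (1 < r) := ⟨hr⟩
  rcases (adj_iff hd hr hdr).1 h with ⟨-, h2 | h2⟩ | ⟨h1, -⟩
  · simp [ringStep, h2]
  · unfold ringStep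
    split_ifs with h3
    · push_cast; exact h3
    · rw [h2]; push_cast; ring
  · simp [ringStep, h1]

theorem hammingDist_add_natAbs_ringStep_le_one_of_adj {p q : (Fin n → ZMod 2) × ZMod r}
    (h : (RCR n d r).Adj p q) :
    hammingDist p.1 q.1 + (ringStep p.2 q.2).natAbs ≤ 1 := by
  have : Fact (1 < r) := ⟨hr⟩
  rcases (adj_iff hd hr hdr).1 h with ⟨h1, -⟩ | ⟨h1, k, -, h2⟩
  · rw [h1, hammingDist_self]; unfold ringStep; split_ifs <;> simp
  · have : hammingDist p.1 q.1 ≤ 1 := Finset.card_le_one.2 fun i hi j hj => by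
      simp only [Finset.mem_filter, Finset.mem_univ, true_and, h2, Pi.add_apply] at hi hj
      by_contra hij
      rcases eq_or_ne i k with rfl | hik
      · exact hj (by simp [Ne.symm hij])
      · exact hi (by simp [hik])
    simpa [ringStep, h1] using this

theorem block_eq_of_adj_of_ne {p q : (Fin n → ZMod 2) × ZMod r} (h : (RCR n d r).Adj p q)
    {k : Fin n} (hk : p.1 k ≠ q.1 k) :
    block d r k = p.2 := by
  rcases (adj_iff hd hr hdr).1 h with ⟨h1, -⟩ | ⟨-, k', hk', h2⟩
  · exact absurd (congrFun h1 k) hk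
  · rcases eq_or_ne k k' with rfl | hkk'
    · exact hk'
    · simp [h2, hkk'] at hk

theorem cast_sum_ringSteps {u v : (Fin n → ZMod 2) × ZMod r} (w : (RCR n d r).Walk u v) :
    ((ringSteps w).sum : ZMod r) = v.2 - u.2 := by
  induction w with
  | nil => simp
  | cons h p ih =>
    rw [ringSteps_cons, List.sum_cons, Int.cast_add, ih]
    linear_combination -snd_eq_add_ringStep_of_adj hd hr hdr h

theorem hammingDist_add_sum_natAbs_ringSteps_le_length {u v : (Fin n → ZMod 2) × ZMod r}
    (w : (RCR n d r).Walk u v) :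
    hammingDist u.1 v.1 + ((ringSteps w).map Int.natAbs).sum ≤ w.length := by
  induction w with
  | nil => simp
  | @cons u m v h p ih =>
    have := hammingDist_triangle u.1 m.1 v.1
    have := hammingDist_add_natAbs_ringStep_le_one_of_adj hd hr hdr h
    simp only [ringSteps_cons, List.map_cons, List.sum_cons, SimpleGraph.Walk.length_cons]
    omega

theorem exists_block_eq_of_ne {u v : (Fin n → ZMod 2) × ZMod r}
    (w : (RCR n d r).Walk u v) {k : Fin n} (hk : u.1 k ≠ v.1 k) :
    ∃ l : ℤ, (ringSteps w).minPrefixSum ≤ l ∧ l ≤ (ringSteps w).maxPrefixSum ∧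
      block d r k = u.2 + l := by
  induction w with
  | nil => exact absurd rfl hk
  | @cons u m v h p ih =>
    have := (ringSteps p).minPrefixSum_le_sum_le_maxPrefixSum
    simp only [ringSteps_cons, List.minPrefixSum, List.maxPrefixSum]
    by_cases hkm : u.1 k = m.1 k
    · obtain ⟨l, hl₁, hl₂, hl⟩ := ih (hkm ▸ hk)
      refine ⟨ringStep u.2 m.2 + l, by omega, by omega, ?_⟩
      rw [hl]
      push_cast
      linear_combination snd_eq_add_ringStep_of_adj hd hr hdr h
    · exact ⟨0, by omega, by omega, by simpa using block_eq_of_adj_of_ne hd hr hdr h hkm⟩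

end

def ringExcess (r : ℕ) : ℕ := if r = 3 then r else 3 * r / 2 - 2

def ringOffset (r : ℕ) : ℕ := if r = 3 then 0 else r / 2

theorem edist_le_add_ringExcess (hd : 0 < d) (hr : 3 ≤ r) (hdr : d * r = n)
    (u v : (Fin n → ZMod 2) × ZMod r) :
    (RCR n d r).edist u v ≤ (n + ringExcess r : ℕ) := by
  have : NeZero r := ⟨by omega⟩
  obtain ⟨a, x⟩ := u
  obtain ⟨b, y⟩ := v
  have hab : hammingDist a b ≤ n := (hammingDist_le_card_fintype).trans (Fintype.card_fin n).le
  set Δ := (y - x).val with hΔ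
  have hy : y = x + Δ := by rw [hΔ, ZMod.natCast_zmod_val]; ring
  have hΔr : Δ < r := ZMod.val_lt _
  have hexcess : ∀ m, m ≤ ringExcess r → hammingDist a b + m ≤ n + ringExcess r := by omega
  have hr1 : ((r - 1 : ℕ) : ZMod r) = -1 := by
    rw [Nat.cast_sub (by omega), ZMod.natCast_self]; simp
  rcases Nat.eq_zero_or_pos Δ with h0 | hpos
  · have hy' : y = x + (r : ℕ) * 1 := by simp [hy, h0]
    rw [hy']
    refine (edist_full_sweep_le hd (by omega) hdr (.inl rfl) (by omega) a b x).trans ?_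
    exact_mod_cast hexcess r (by unfold ringExcess; split_ifs <;> omega)
  rcases le_or_gt Δ (r / 2) with hsmall | hbig
  · have hy' : y = x - (Δ - 1 : ℕ) * (-1) + (r - 1 : ℕ) * (-1) := by
      rw [hy, hr1, Nat.cast_sub hpos]; ring
    rw [hy']
    refine (edist_turn_sweep_le hd (by omega) hdr (.inr rfl) _ a b x).trans ?_
    rw [add_assoc]
    exact_mod_cast hexcess _ (by unfold ringExcess; split_ifs <;> omega)
  · have hy' : y = x - (r - 1 - Δ : ℕ) * 1 + (r - 1 : ℕ) * 1 := by
      rw [hy, Nat.cast_sub (by omega), hr1]; ring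
    rw [hy']
    refine (edist_turn_sweep_le hd (by omega) hdr (.inl rfl) _ a b x).trans ?_
    rw [add_assoc]
    exact_mod_cast hexcess _ (by unfold ringExcess; split_ifs <;> omega)

theorem ringExcess_le (hr : 3 ≤ r) {N : ℕ} {e : ℤ} (hrange : 2 * ((r : ℤ) - 1) ≤ N + e.natAbs)
    (he : e.natAbs ≤ N) (hcong : (e : ZMod r) = ringOffset r) : ringExcess r ≤ N := by
  obtain ⟨t, ht⟩ : (r : ℤ) ∣ e - ringOffset r := by
    rw [← ZMod.intCast_zmod_eq_zero_iff_dvd]; push_cast; rw [hcong, sub_self]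
  unfold ringExcess
  unfold ringOffset at ht
  -- `e = ringOffset r + r t`: for `t ∈ {-1, 0}` use `hrange`, otherwise `|e| ≥ r + ringOffset r`.
  rcases (by omega : t ≤ -2 ∨ t = -1 ∨ t = 0 ∨ 1 ≤ t) with ht' | rfl | rfl | ht'
  · have : (r : ℤ) * t ≤ r * -2 := mul_le_mul_of_nonneg_left ht' (by positivity)
    split_ifs at ht ⊢ <;> omega
  · split_ifs at ht ⊢ <;> omega
  · split_ifs at ht ⊢ <;> omega
  · have : (r : ℤ) * 1 ≤ r * t := mul_le_mul_of_nonneg_left ht' (by positivity)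
    split_ifs at ht ⊢ <;> omega

theorem add_ringExcess_le_length (hd : 0 < d) (hr : 3 ≤ r) (hdr : d * r = n)
    (w : (RCR n d r).Walk (0, 0) (1, (ringOffset r : ZMod r))) :
    n + ringExcess r ≤ w.length := by
  have : NeZero r := ⟨by omega⟩
  have hne : ∀ k, (0 : Fin n → ZMod 2) k ≠ (1 : Fin n → ZMod 2) k := fun _ => zero_ne_one
  have hham : hammingDist (0 : Fin n → ZMod 2) 1 = n := by simp [hammingDist]
  have hlen := hammingDist_add_sum_natAbs_ringSteps_le_length hd (by omega) hdr w
  have hrange : (r : ℤ) ≤ (ringSteps w).maxPrefixSum - (ringSteps w).minPrefixSum + 1 := by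
    refine ZMod.le_sub_add_one_of_surjOn fun y _ => ?_
    obtain ⟨k, rfl⟩ := block_surjective hd (by omega) hdr y
    obtain ⟨l, hl₁, hl₂, hl⟩ := exists_block_eq_of_ne hd (by omega) hdr w (hne k)
    exact ⟨l, ⟨hl₁, hl₂⟩, by simpa using hl.symm⟩
  have hcong := cast_sum_ringSteps hd (by omega) hdr w
  have := ringExcess_le hr (N := ((ringSteps w).map Int.natAbs).sum)
    (by have := (ringSteps w).two_mul_sub_minPrefixSum_le; omega)
    (ringSteps w).natAbs_sum_le_sum_natAbs (by simpa using hcong)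
  simp only [hham] at hlen
  omega

end RCR

theorem stmt_17_general (n d r : ℕ) (hd : 1 ≤ d) (hr : 3 ≤ r)
    (hdr : d * r = n) :
    (∀ u v : (Fin n → ZMod 2) × ZMod r,
      (RCR n d r).dist u v ≤ (if r = 3 then n + r else n + 3 * r / 2 - 2)) ∧
    (∃ u v : (Fin n → ZMod 2) × ZMod r,
      (RCR n d r).dist u v = (if r = 3 then n + r else n + 3 * r / 2 - 2)) := by
  have hformula : (if r = 3 then n + r else n + 3 * r / 2 - 2) = n + RCR.ringExcess r := by
    unfold RCR.ringExcess; split_ifs <;> omega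
  have hupper := RCR.edist_le_add_ringExcess hd hr hdr
  rw [hformula]
  refine ⟨fun u v => ENat.toNat_le_of_le_natCast (hupper u v), (0, 0), (1, RCR.ringOffset r),
    le_antisymm (ENat.toNat_le_of_le_natCast (hupper _ _)) ?_⟩
  obtain ⟨w, hw⟩ := (SimpleGraph.reachable_of_edist_ne_top
    (ne_top_of_le_ne_top (ENat.natCast_ne_top _) (hupper _ _))).exists_walk_length_eq_dist
  exact hw ▸ RCR.add_ringExcess_le_length hd hr hdr w

/-- if `dr = n` and `r ≥ 3`, then
`diam(Q_n(d,r)) = n + r` if `r = 3` and `n + ⌊3r/2⌋ − 2` if `r ≥ 4`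
(the diameter being the maximum of the distances over all pairs). -/
theorem stmt_17 (n d r : ℕ) (hn : 2 ≤ n) (hd : 1 ≤ d) (hr : 3 ≤ r)
    (hdr : d * r = n) :
    (∀ u v : (Fin n → ZMod 2) × ZMod r,
      (RCR n d r).dist u v ≤ (if r = 3 then n + r else n + 3 * r / 2 - 2)) ∧
    (∃ u v : (Fin n → ZMod 2) × ZMod r,
      (RCR n d r).dist u v = (if r = 3 then n + r else n + 3 * r / 2 - 2)) :=
  stmt_17_general n d r hd hr hdr
end

section
/- Let dr ≥ 2n with dr ≡ 0 (mod n) and r ≥ 3. Then the diameter of Q_n(d,r) equals n + max{⌊r/2⌋, 2⌈n/d⌉ − 2}. -/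
open SimpleGraph

theorem hammingDist_add_hammingDist_of_forall_eq_or_eq {ι : Type*} [Fintype ι]
    {β : ι → Type*} [∀ i, DecidableEq (β i)] {x y z : ∀ i, β i}
    (h : ∀ i, y i = x i ∨ y i = z i) :
    hammingDist x y + hammingDist y z = hammingDist x z := by
  simp only [hammingDist, Finset.card_filter, ← Finset.sum_add_distrib]
  refine Finset.sum_congr rfl fun i _ => ?_
  rcases h i with h | h <;> rw [h] <;> split_ifs <;> simp_all

namespace RCR

variable {n d r : ℕ}

def window (n d : ℕ) (e : ZMod n) : Set (ZMod n) := {c | ∃ i : ℕ, 1 ≤ i ∧ i ≤ d ∧ c = i + e}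

def windowOffset (n d : ℕ) (x : ZMod r) : ZMod n := d * x.val

lemma natCast_fin_inj {k k' : Fin n} : ((k : ℕ) : ZMod n) = (k' : ℕ) ↔ k = k' := by
  refine ⟨fun h => Fin.ext ?_, fun h => h ▸ rfl⟩
  simpa only [ZMod.val_cast_of_lt k.2, ZMod.val_cast_of_lt k'.2] using congrArg ZMod.val h

lemma ebasis_eq_single {k : Fin n} {j : ZMod n} (h : ((k : ℕ) : ZMod n) = j) :
    Ebasis n j = Pi.single k 1 := by
  funext k'
  subst h
  simp only [Ebasis, Pi.single_apply, natCast_fin_inj]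

lemma windowOffset_add_intCast [NeZero r] (hdr : n ∣ d * r) (x : ZMod r) (z : ℤ) :
    windowOffset n d (x + (z : ZMod r)) = windowOffset n d x + d * z := by
  obtain ⟨q, hq⟩ : (r : ℤ) ∣ (x + z).val - (x.val + z) := by
    rw [← ZMod.intCast_eq_intCast_iff_dvd_sub]
    push_cast
    simp only [ZMod.natCast_zmod_val]
  have hdr0 : ((d * r : ℕ) : ZMod n) = 0 := (ZMod.natCast_eq_zero_iff _ _).mpr hdr
  have hval := congrArg (Int.cast : ℤ → ZMod n) (sub_eq_iff_eq_add.mp hq)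
  push_cast at hval hdr0
  rw [windowOffset, windowOffset, hval]
  linear_combination (q : ZMod n) * hdr0

lemma adj_add_one (hr : 1 < r) (a : Fin n → ZMod 2) (x : ZMod r) :
    (RCR n d r).Adj (a, x) (a, x + 1) := by
  have : Fact (1 < r) := ⟨hr⟩
  refine (fromRel_adj _ _ _).mpr ⟨fun h => ?_, Or.inl (Or.inl ⟨rfl, rfl⟩)⟩
  simpa using congrArg Prod.snd h

lemma adj_update {a : Fin n → ZMod 2} {x : ZMod r} {k : Fin n}
    (hk : ((k : ℕ) : ZMod n) ∈ window n d (windowOffset n d x)) {b : ZMod 2}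
    (hb : b ≠ a k) :
    (RCR n d r).Adj (a, x) (Function.update a k b, x) := by
  obtain ⟨i, hi, hid, hki⟩ := hk
  have hupd : Function.update a k b = a + Ebasis n (i + windowOffset n d x) := by
    rw [ebasis_eq_single hki]
    funext j
    by_cases hj : j = k
    · subst hj
      revert hb
      simp only [Function.update_self, Pi.add_apply, Pi.single_eq_same]
      generalize a j = c
      revert b c
      decide
    · simp [hj]
  refine (fromRel_adj _ _ _).mpr ⟨fun h => ?_, Or.inl (Or.inr ⟨rfl, i, hi, hid, hupd⟩)⟩
  exact hb (by simpa using (congrFun (congrArg Prod.fst h) k).symm)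

lemma exists_ebasis_eq_single [NeZero n] (e : ZMod n) :
    ∃ k : Fin n, ((k : ℕ) : ZMod n) = e ∧ Ebasis n e = Pi.single k 1 :=
  ⟨⟨e.val, e.val_lt⟩, ZMod.natCast_zmod_val e, ebasis_eq_single (ZMod.natCast_zmod_val e)⟩

lemma adj_cases [NeZero n] {p q : (Fin n → ZMod 2) × ZMod r} (h : (RCR n d r).Adj p q) :
    (p.1 = q.1 ∧ (q.2 = p.2 + 1 ∨ p.2 = q.2 + 1)) ∨
    (p.2 = q.2 ∧ ∃ k : Fin n, ((k : ℕ) : ZMod n) ∈ window n d (windowOffset n d p.2) ∧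
      ∀ j, p.1 j ≠ q.1 j → j = k) := by
  have flip_single {a b : Fin n → ZMod 2} {k : Fin n} (hab : b = a + Pi.single k 1) (j : Fin n)
      (hj : a j ≠ b j) : j = k := by
    by_contra hjk
    simp [hab, hjk] at hj
  obtain ⟨-, (⟨h1, h2⟩ | ⟨h2, i, hi, hid, h1⟩) | (⟨h1, h2⟩ | ⟨h2, i, hi, hid, h1⟩)⟩ :=
    (fromRel_adj _ _ _).mp h
  · exact Or.inl ⟨h1, Or.inl h2⟩
  · obtain ⟨k, hk, hE⟩ := exists_ebasis_eq_single ((i : ZMod n) + windowOffset n d p.2)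
    exact Or.inr ⟨h2, k, ⟨i, hi, hid, hk⟩, flip_single (hE ▸ h1)⟩
  · exact Or.inl ⟨h1.symm, Or.inr h2⟩
  · obtain ⟨k, hk, hE⟩ := exists_ebasis_eq_single ((i : ZMod n) + windowOffset n d q.2)
    refine Or.inr ⟨h2.symm, k, ⟨i, hi, hid, h2 ▸ hk⟩, fun j hj => flip_single (hE ▸ h1) j ?_⟩
    exact Ne.symm hj

lemma edist_le_hammingDist_of_mem_window (x : ZMod r) (a b : Fin n → ZMod 2)
    (hab : ∀ k, a k ≠ b k → ((k : ℕ) : ZMod n) ∈ window n d (windowOffset n d x)) :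
    (RCR n d r).edist (a, x) (b, x) ≤ hammingDist a b := by
  induction hm : hammingDist a b using Nat.strong_induction_on generalizing a with
  | _ m ih =>
  by_cases hab' : a = b
  · simp [hab']
  obtain ⟨k, hk⟩ := Function.ne_iff.mp hab'
  set a' := Function.update a k (b k)
  have hbetween : ∀ j, a' j = a j ∨ a' j = b j := fun j => by
    by_cases hj : j = k
    · subst hj; simp [a']
    · simp [a', hj]
  have hsplit := hammingDist_add_hammingDist_of_forall_eq_or_eq hbetween
  have hpos : 0 < hammingDist a a' :=
    hammingDist_pos.mpr fun h => hk (by simpa [a'] using congrFun h k)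
  have hcov : ∀ j, a' j ≠ b j → ((j : ℕ) : ZMod n) ∈ window n d (windowOffset n d x) :=
    fun j hj => hab j fun h => hj (by rcases hbetween j with h' | h' <;> simp_all)
  calc (RCR n d r).edist (a, x) (b, x)
      ≤ (RCR n d r).edist (a, x) (a', x) + (RCR n d r).edist (a', x) (b, x) :=
        SimpleGraph.edist_triangle
    _ ≤ 1 + hammingDist a' b := by
      gcongr
      · exact edist_le_one_iff_adj_or_eq.mpr (Or.inl (adj_update (hab k hk) (Ne.symm hk)))
      · exact ih _ (by omega) a' hcov rfl
    _ ≤ m := by exact_mod_cast (by omega : 1 + hammingDist a' b ≤ m)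

lemma edist_add_natCast_le (hr : 1 < r) (a : Fin n → ZMod 2) (x : ZMod r) (s : ℕ) :
    (RCR n d r).edist (a, x) (a, x + s) ≤ s := by
  induction s with
  | zero => simp
  | succ s ih =>
    calc (RCR n d r).edist (a, x) (a, x + ((s + 1 : ℕ) : ZMod r))
        ≤ (RCR n d r).edist (a, x) (a, x + s) +
            (RCR n d r).edist (a, x + s) (a, x + s + 1) := by
          rw [Nat.cast_succ, ← add_assoc]; exact SimpleGraph.edist_triangle
      _ ≤ s + 1 := add_le_add ih (edist_le_one_iff_adj_or_eq.mpr (Or.inl (adj_add_one hr _ _)))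
      _ = (s + 1 : ℕ) := by push_cast; rfl

lemma edist_le_hammingDist_add (hr : 1 < r) (hdr : n ∣ d * r) (s : ℕ) (a b : Fin n → ZMod 2)
    (x : ZMod r) (hab : ∀ k, a k ≠ b k → ∃ j ≤ s,
      ((k : ℕ) : ZMod n) ∈ window n d (windowOffset n d x + d * j)) :
    (RCR n d r).edist (a, x) (b, x + s) ≤ hammingDist a b + s := by
  have : NeZero r := ⟨by omega⟩
  classical
  induction s generalizing a x with
  | zero =>
    simpa using edist_le_hammingDist_of_mem_window x a b fun k hk => by
      obtain ⟨j, hj, hkj⟩ := hab k hk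
      simpa [Nat.le_zero.mp hj] using hkj
  | succ s ih =>
    let a' : Fin n → ZMod 2 := fun k =>
      if ((k : ℕ) : ZMod n) ∈ window n d (windowOffset n d x) then b k else a k
    have hbetween : ∀ k, a' k = a k ∨ a' k = b k := fun k => by
      simp only [a']
      split_ifs <;> simp
    have hfix := edist_le_hammingDist_of_mem_window (d := d) x a a' fun k hk => by
      by_contra h
      simp only [a', if_neg h, ne_eq, not_true_eq_false] at hk
    have hrest := ih a' (x + 1) fun k hk => by
      have hkx : ((k : ℕ) : ZMod n) ∉ window n d (windowOffset n d x) :=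
        fun h => hk (by simp only [a', if_pos h])
      obtain ⟨j, hj, hkj⟩ := hab k (by simpa only [a', if_neg hkx] using hk)
      obtain ⟨j, rfl⟩ : ∃ j', j = j' + 1 :=
        Nat.exists_eq_add_one.mpr (Nat.pos_of_ne_zero fun h => hkx (by simpa [h] using hkj))
      refine ⟨j, by omega, ?_⟩
      have hx1 := windowOffset_add_intCast hdr x 1
      push_cast at hx1 hkj
      rw [hx1]
      convert hkj using 2
      ring
    calc (RCR n d r).edist (a, x) (b, x + ((s + 1 : ℕ) : ZMod r))
        ≤ (RCR n d r).edist (a, x) (a', x) + ((RCR n d r).edist (a', x) (a', x + 1) +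
            (RCR n d r).edist (a', x + 1) (b, x + 1 + s)) := by
          rw [Nat.cast_succ, add_comm (s : ZMod r), ← add_assoc]
          exact SimpleGraph.edist_triangle.trans (add_le_add_right SimpleGraph.edist_triangle _)
      _ ≤ hammingDist a a' + (1 + (hammingDist a' b + s)) := by
          gcongr
          exact edist_le_one_iff_adj_or_eq.mpr (Or.inl (adj_add_one hr _ _))
      _ = hammingDist a b + ((s + 1 : ℕ) : ℕ∞) := by
          rw [← hammingDist_add_hammingDist_of_forall_eq_or_eq hbetween]
          push_cast
          ring

lemma exists_lt_mem_window [NeZero n] (hd : 0 < d) (e c : ZMod n) :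
    ∃ j < (n + d - 1) / d, c ∈ window n d (e + d * j) := by
  set t := (c - e - 1).val
  have ht : t < n := ZMod.val_lt _
  refine ⟨t / d, ?_, t % d + 1, by omega, Nat.mod_lt _ hd, ?_⟩
  · calc t / d < t / d + 1 := Nat.lt_succ_self _
      _ = (t + d) / d := (Nat.add_div_right t hd).symm
      _ ≤ (n + d - 1) / d := Nat.div_le_div_right (by omega)
  · have h : ((t : ℕ) : ZMod n) = c - e - 1 := ZMod.natCast_zmod_val _
    rw [← Nat.div_add_mod t d] at h
    push_cast at h ⊢
    linear_combination -h

lemma edist_le_of_natCast_eq [NeZero n] (hd : 0 < d) (hr : 1 < r) (hdr : n ∣ d * r)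
    (a b : Fin n → ZMod 2) (x y : ZMod r) (t : ℕ) (ht : t ≤ r / 2)
    (hxy : (t : ZMod r) = y - x) :
    (RCR n d r).edist (a, x) (b, y) ≤ (n + max (r / 2) (2 * ((n + d - 1) / d) - 2) : ℕ) := by
  set s := max t ((n + d - 1) / d - 1)
  have hforth := edist_le_hammingDist_add hr hdr s a b x fun k _ => by
    obtain ⟨j, hj, hk⟩ := exists_lt_mem_window hd (windowOffset n d x) k
    exact ⟨j, by omega, hk⟩
  have hback : (RCR n d r).edist (b, y) (b, x + s) ≤ (s - t : ℕ) := by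
    have := edist_add_natCast_le (d := d) hr b y (s - t)
    rwa [Nat.cast_sub (le_max_left _ _), hxy, show y + ((s : ZMod r) - (y - x)) = x + s by ring]
      at this
  have hab : hammingDist a b ≤ n := by simpa using hammingDist_le_card_fintype (x := a) (y := b)
  calc (RCR n d r).edist (a, x) (b, y)
      ≤ (RCR n d r).edist (a, x) (b, x + s) + (RCR n d r).edist (b, x + s) (b, y) :=
        SimpleGraph.edist_triangle
    _ ≤ (hammingDist a b + s : ℕ) + (s - t : ℕ) := by
        rw [SimpleGraph.edist_comm] at hback
        push_cast
        exact add_le_add hforth hback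
    _ ≤ _ := by exact_mod_cast (by omega)

lemma edist_le_n_add_max [NeZero n] (hd : 0 < d) (hr : 1 < r) (hdr : n ∣ d * r)
    (u v : (Fin n → ZMod 2) × ZMod r) :
    (RCR n d r).edist u v ≤ (n + max (r / 2) (2 * ((n + d - 1) / d) - 2) : ℕ) := by
  have : NeZero r := ⟨by omega⟩
  obtain ⟨a, x⟩ := u
  obtain ⟨b, y⟩ := v
  have hle := ZMod.natAbs_valMinAbs_le (y - x)
  have hcast := ZMod.coe_valMinAbs (y - x)
  rcases Int.natAbs_eq (y - x).valMinAbs with h | h <;> rw [h] at hcast <;>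
    simp only [Int.cast_neg, Int.cast_natCast] at hcast
  · exact edist_le_of_natCast_eq hd hr hdr a b x y _ hle hcast
  · rw [SimpleGraph.edist_comm]
    exact edist_le_of_natCast_eq hd hr hdr b a y x _ hle (by linear_combination -hcast)

lemma reachable [NeZero n] (hd : 0 < d) (hr : 1 < r) (hdr : n ∣ d * r)
    (u v : (Fin n → ZMod 2) × ZMod r) : (RCR n d r).Reachable u v :=
  reachable_of_edist_ne_top <|
    ne_top_of_le_ne_top (ENat.natCast_ne_top _) (edist_le_n_add_max hd hr hdr u v)

/-- Heights are those of the lift of the ring coordinate to `ℤ`, measured from `v`: the walk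
starts at height `s`, ends at height `0` and visits every height in `[lo, hi]`, which takes at
least `2 (hi - lo) - |s|` ring steps. -/
lemma exists_lift_bounds [NeZero n] [NeZero r] (hdr : n ∣ d * r)
    {u v : (Fin n → ZMod 2) × ZMod r} (W : (RCR n d r).Walk u v) :
    ∃ lo hi s : ℤ, lo ≤ 0 ∧ 0 ≤ hi ∧ lo ≤ s ∧ s ≤ hi ∧ (s : ZMod r) = u.2 - v.2 ∧
      (hammingDist u.1 v.1 : ℤ) + 2 * (hi - lo) - |s| ≤ W.length ∧
      ∀ k : Fin n, u.1 k ≠ v.1 k → ∃ z, lo ≤ z ∧ z ≤ hi ∧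
        ((k : ℕ) : ZMod n) ∈ window n d (windowOffset n d v.2 + d * z) := by
  induction W with
  | nil =>
    exact ⟨0, 0, 0, le_rfl, le_rfl, le_rfl, le_rfl, by simp, by simp, fun k hk => absurd rfl hk⟩
  | @cons u w v h W ih =>
    obtain ⟨lo, hi, s, hlo, hhi, hls, hsh, hs, hlen, hcov⟩ := ih
    rcases adj_cases h with ⟨h1, hstep⟩ | ⟨h2, k, hk, hdiff⟩
    · obtain ⟨δ, hδ, hδr⟩ : ∃ δ : ℤ, (δ = 1 ∨ δ = -1) ∧ (δ : ZMod r) = u.2 - w.2 := by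
        rcases hstep with h | h
        · exact ⟨-1, Or.inr rfl, by rw [h]; push_cast; ring⟩
        · exact ⟨1, Or.inl rfl, by rw [h]; push_cast; ring⟩
      refine ⟨min lo (s + δ), max hi (s + δ), s + δ, by omega, by omega, by omega, by omega,
        ?_, ?_, fun k hk => ?_⟩
      · push_cast
        rw [hs, hδr]
        ring
      · rw [h1, Walk.length_cons]
        push_cast
        simp only [abs_eq_max_neg] at hlen ⊢
        omega
      · obtain ⟨z, hz1, hz2, hz⟩ := hcov k (h1 ▸ hk)
        exact ⟨z, by omega, by omega, hz⟩
    · have hus : u.2 = v.2 + (s : ZMod r) := by rw [hs, h2]; ring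
      refine ⟨lo, hi, s, hlo, hhi, hls, hsh, by rw [h2, hs], ?_, fun j hj => ?_⟩
      · have hstep : hammingDist u.1 w.1 ≤ 1 := Finset.card_le_one.mpr fun i hi j hj => by
          simp only [Finset.mem_filter, Finset.mem_univ, true_and] at hi hj
          rw [hdiff i hi, hdiff j hj]
        have := hammingDist_triangle u.1 w.1 v.1
        rw [Walk.length_cons]
        push_cast
        omega
      · by_cases hwj : w.1 j = v.1 j
        · obtain rfl := hdiff j (hwj ▸ hj)
          refine ⟨s, hls, hsh, ?_⟩
          rwa [hus, windowOffset_add_intCast hdr] at hk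
        · exact hcov j hwj

lemma le_mul_of_forall_mem_window [NeZero n] (e : ZMod n) (lo hi : ℤ)
    (h : ∀ c : ZMod n, ∃ z, lo ≤ z ∧ z ≤ hi ∧ c ∈ window n d (e + d * z)) :
    n ≤ d * (hi + 1 - lo).toNat := by
  classical
  calc n = (Finset.univ : Finset (ZMod n)).card := (ZMod.card n).symm
    _ ≤ ((Finset.Icc 1 d ×ˢ Finset.Icc lo hi).image
          fun p : ℕ × ℤ => (p.1 : ZMod n) + (e + d * p.2)).card :=
        Finset.card_le_card fun c _ => by
          obtain ⟨z, hlo, hhi, i, hi1, hid, rfl⟩ := h c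
          exact Finset.mem_image.mpr ⟨(i, z), by simp [*], rfl⟩
    _ ≤ (Finset.Icc 1 d ×ˢ Finset.Icc lo hi).card := Finset.card_image_le
    _ = d * (hi + 1 - lo).toNat := by simp

lemma hammingDist_zero_one : hammingDist (0 : Fin n → ZMod 2) 1 = n := by
  simp [hammingDist]

lemma le_dist_antipodal [NeZero n] (hd : 0 < d) (hr : 1 < r) (hdr : n ∣ d * r) :
    n + r / 2 ≤ (RCR n d r).dist (0, 0) (1, ((r / 2 : ℕ) : ZMod r)) := by
  have : NeZero r := ⟨by omega⟩
  obtain ⟨W, hW⟩ :=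
    (reachable hd hr hdr (0, 0) (1, ((r / 2 : ℕ) : ZMod r))).exists_walk_length_eq_dist
  obtain ⟨lo, hi, s, hlo, hhi, hls, hsh, hs, hlen, -⟩ := exists_lift_bounds hdr W
  have hhalf : r / 2 ≤ s.natAbs := by
    have := ZMod.natAbs_min_of_le_div_two r ((r / 2 : ℕ) : ℤ) (-s)
      (by rw [Int.cast_neg, hs, Int.cast_natCast]; simp) (Int.natAbs_natCast _).le
    rwa [Int.natAbs_natCast, Int.natAbs_neg] at this
  rw [hammingDist_zero_one] at hlen
  rw [← hW]
  zify at hhalf ⊢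
  simp only [abs_eq_max_neg] at hlen hhalf
  omega

lemma two_mul_ceil_div_sub_two_le (hd : 0 < d) (h2n : 2 * n ≤ d * r) :
    2 * ((n + d - 1) / d) - 2 ≤ r := by
  have h1 : d * ((n + d - 1) / d) ≤ n + d - 1 := Nat.mul_div_le _ _
  by_contra! h
  have h2 := Nat.mul_lt_mul_of_pos_left h hd
  rw [Nat.mul_sub, Nat.mul_left_comm] at h2
  omega

lemma le_dist_same_position [NeZero n] (hd : 0 < d) (hr : 1 < r) (hdr : n ∣ d * r)
    (h2n : 2 * n ≤ d * r) :
    n + (2 * ((n + d - 1) / d) - 2) ≤ (RCR n d r).dist (0, 0) (1, 0) := by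
  have : NeZero r := ⟨by omega⟩
  obtain ⟨W, hW⟩ := (reachable hd hr hdr (0, 0) (1, 0)).exists_walk_length_eq_dist
  obtain ⟨lo, hi, s, hlo, hhi, hls, hsh, hs, hlen, hcov⟩ := exists_lift_bounds hdr W
  have hcover := le_mul_of_forall_mem_window _ lo hi fun c => by
    simpa only [ZMod.natCast_zmod_val] using hcov ⟨c.val, c.val_lt⟩ (by simp)
  have hm : (n + d - 1) / d ≤ (hi + 1 - lo).toNat := by
    rw [← Nat.lt_succ_iff, Nat.div_lt_iff_lt_mul hd, Nat.succ_mul, mul_comm]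
    omega
  have hwind : s = 0 ∨ (r : ℤ) ≤ |s| := by
    rcases eq_or_ne s 0 with h | h
    · exact Or.inl h
    · refine Or.inr (Int.le_of_dvd (abs_pos.mpr h) ((dvd_abs _ _).mpr ?_))
      rw [← ZMod.intCast_zmod_eq_zero_iff_dvd, hs, sub_self]
  have hrm := two_mul_ceil_div_sub_two_le hd h2n
  rw [hammingDist_zero_one] at hlen
  rw [← hW]
  zify at hrm hm ⊢
  simp only [abs_eq_max_neg] at hlen hwind
  omega

end RCR

theorem stmt_18_general (n d r : ℕ) (hn : 2 ≤ n) (hd : 1 ≤ d) (hr : 3 ≤ r)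
    (h2n : 2 * n ≤ d * r) (hmod : (d * r) % n = 0) :
    (∀ u v : (Fin n → ZMod 2) × ZMod r,
      (RCR n d r).dist u v ≤ n + max (r / 2) (2 * ((n + d - 1) / d) - 2)) ∧
    (∃ u v : (Fin n → ZMod 2) × ZMod r,
      (RCR n d r).dist u v = n + max (r / 2) (2 * ((n + d - 1) / d) - 2)) := by
  have : NeZero n := ⟨by omega⟩
  have hr1 : 1 < r := by omega
  have hdr : n ∣ d * r := Nat.dvd_of_mod_eq_zero hmod
  have hub : ∀ u v, (RCR n d r).dist u v ≤ n + max (r / 2) (2 * ((n + d - 1) / d) - 2) :=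
    fun u v => ENat.toNat_le_of_le_natCast (RCR.edist_le_n_add_max hd hr1 hdr u v)
  refine ⟨hub, ?_⟩
  rcases le_total (2 * ((n + d - 1) / d) - 2) (r / 2) with h | h
  · exact ⟨_, _, le_antisymm (hub _ _) (max_eq_left h ▸ RCR.le_dist_antipodal hd hr1 hdr)⟩
  · exact ⟨_, _, le_antisymm (hub _ _) (max_eq_right h ▸ RCR.le_dist_same_position hd hr1 hdr h2n)⟩

/-- if `dr ≥ 2n`, `dr ≡ 0 (mod n)` and `r ≥ 3`, then
`diam(Q_n(d,r)) = n + max(⌊r/2⌋, 2⌈n/d⌉ − 2)`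
(the diameter being the maximum of the distances over all pairs; here
`⌈n/d⌉ = (n + d − 1)/d`). -/
theorem stmt_18 (n d r : ℕ) (hn : 2 ≤ n) (hd : 1 ≤ d) (hdn : d ≤ n) (hr : 3 ≤ r)
    (h2n : 2 * n ≤ d * r) (hmod : (d * r) % n = 0) :
    (∀ u v : (Fin n → ZMod 2) × ZMod r,
      (RCR n d r).dist u v ≤ n + max (r / 2) (2 * ((n + d - 1) / d) - 2)) ∧
    (∃ u v : (Fin n → ZMod 2) × ZMod r,
      (RCR n d r).dist u v = n + max (r / 2) (2 * ((n + d - 1) / d) - 2)) :=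
  stmt_18_general n d r hn hd hr h2n hmod
end

section
/- Let n ≥ 4. The diameter of the cube-connected cycles network CC_n equals 2n if n = 3 and ⌊5n/2⌋ − 2 if n ≥ 4. -/
/-!
A vertex `(a, x)` is a bit string `a` with a cursor `x` on the cycle `ℤ_n`: rotations move the
cursor, a flip toggles bit `1 + x`. A walk from `u` to `v` therefore consists of a walk of the
cursor on the cycle that ends at `v.2` and passes under every bit where `u.1` and `v.1` differ,
plus at least one flip per such bit, and conversely any such cursor walk can be completed by
flipping each differing bit on the first pass. So `dist u v ≤ coverLength n + n`, where
`coverLength n` bounds the length of a cursor walk covering the whole cycle with a prescribed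
displacement. For `u = (0, 0)` and `v = (1, farPos n)` all `n` bits differ, and a covering walk
from `0` to `farPos n` has length at least `coverLength n`: lifted to `ℤ` it spans an interval of
length `n - 1`, which it must cross twice up to its final displacement.
-/

section IntSeq

variable {f : ℕ → ℤ}

theorem abs_sub_le_of_abs_succ_sub_le (hf : ∀ k, |f (k + 1) - f k| ≤ 1) {i j : ℕ}
    (hij : i ≤ j) : |f j - f i| ≤ j - i := by
  induction j, hij using Nat.le_induction with
  | base => simp
  | succ j _ ih =>
    have := abs_sub_le (f (j + 1)) (f j) (f i)
    have := hf j
    push_cast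
    linarith

/-- The walk `f` crosses `[f i, f j]` once between times `i` and `j`, and it must also get from
`0` to the first of these endpoints and from the second one to `f L`. -/
theorem two_mul_sub_sub_abs_le (hf : ∀ k, |f (k + 1) - f k| ≤ 1) (h0 : f 0 = 0) {i j L : ℕ}
    (hi : i ≤ L) (hj : j ≤ L) : 2 * (f j - f i) - |f L| ≤ L := by
  have hL := le_abs_self (f L)
  have hL' := neg_abs_le (f L)
  rcases le_total i j with hij | hji
  · have h₁ := abs_sub_le_of_abs_succ_sub_le hf (Nat.zero_le i)
    have h₂ := abs_sub_le_of_abs_succ_sub_le hf hij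
    have h₃ := abs_sub_le_of_abs_succ_sub_le hf hj
    rw [abs_le] at h₁ h₂ h₃
    rw [h0] at h₁
    push_cast at h₁ h₂ h₃
    omega
  · have h₁ := abs_sub_le_of_abs_succ_sub_le hf (Nat.zero_le j)
    have h₂ := abs_sub_le_of_abs_succ_sub_le hf hji
    have h₃ := abs_sub_le_of_abs_succ_sub_le hf hi
    rw [abs_le] at h₁ h₂ h₃
    rw [h0] at h₁
    push_cast at h₁ h₂ h₃
    omega

theorem exists_sub_ge_of_forall_intCast_eq {n L : ℕ} [NeZero n]
    (hf : ∀ r : ZMod n, ∃ k ≤ L, (f k : ZMod n) = r) :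
    ∃ i ≤ L, ∃ j ≤ L, (n : ℤ) - 1 ≤ f j - f i := by
  have hne : (Finset.range (L + 1)).Nonempty := ⟨0, by simp⟩
  obtain ⟨i, hi, hmin⟩ := Finset.exists_min_image _ f hne
  obtain ⟨j, hj, hmax⟩ := Finset.exists_max_image _ f hne
  refine ⟨i, Finset.mem_range_succ_iff.1 hi, j, Finset.mem_range_succ_iff.1 hj, ?_⟩
  have hsurj : Set.SurjOn (fun z : ℤ => (z : ZMod n)) (Finset.Icc (f i) (f j))
      (Finset.univ : Finset (ZMod n)) := by
    intro r _
    obtain ⟨k, hk, rfl⟩ := hf r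
    have hk' : k ∈ Finset.range (L + 1) := Finset.mem_range_succ_iff.2 hk
    exact ⟨f k, Finset.mem_Icc.2 ⟨hmin k hk', hmax k hk'⟩, rfl⟩
  have := Finset.card_le_card_of_surjOn _ hsurj
  rw [Finset.card_univ, ZMod.card, Int.card_Icc] at this
  have := NeZero.pos n
  omega

end IntSeq

theorem ZMod.add_one_eq_of_ne {u v : ZMod 2} (h : u ≠ v) : u + 1 = v := by
  revert u v; decide

theorem hammingDist_add_single_add_one {ι : Type*} [Fintype ι] [DecidableEq ι]
    {a b : ι → ZMod 2} {k : ι} (h : a k ≠ b k) :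
    hammingDist (a + Pi.single k 1) b + 1 = hammingDist a b := by
  have hfilter : ({i | (a + Pi.single k 1 : ι → ZMod 2) i ≠ b i} : Finset ι) =
      ({i | a i ≠ b i} : Finset ι).erase k := by
    ext i
    rcases eq_or_ne i k with rfl | hi
    · simp [ZMod.add_one_eq_of_ne h]
    · simp [hi]
  rw [hammingDist, hfilter, Finset.card_erase_add_one (by simpa using h), hammingDist]

theorem hammingDist_le_hammingDist_add_single_add_one {ι : Type*} [Fintype ι] [DecidableEq ι]
    (a b : ι → ZMod 2) (k : ι) : hammingDist a b ≤ hammingDist (a + Pi.single k 1) b + 1 := by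
  by_cases h : a k = b k
  · have h' : (a + Pi.single k 1 : ι → ZMod 2) k ≠ b k := by simp [← h]
    have := hammingDist_add_single_add_one h'
    have hinv : a + Pi.single k 1 + Pi.single k 1 = a := by
      rw [add_assoc, ← Pi.single_add]; simp [show (1 + 1 : ZMod 2) = 0 from rfl]
    rw [hinv] at this
    omega
  · exact (hammingDist_add_single_add_one h).ge

namespace CCC

/-- A list `l` of units `±1` encodes a walk on the cycle `ℤ_n`, and `offset l k` is its
displacement after `k` steps, computed in `ℤ`. -/
def offset (l : List ℤˣ) (k : ℕ) : ℤ := ((l.take k).map (↑)).sum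

@[simp] theorem offset_zero (l : List ℤˣ) : offset l 0 = 0 := by simp [offset]

@[simp] theorem offset_nil (k : ℕ) : offset [] k = 0 := by simp [offset]

theorem offset_cons_succ (s : ℤˣ) (l : List ℤˣ) (k : ℕ) :
    offset (s :: l) (k + 1) = s + offset l k := by simp [offset]

theorem offset_append (l₁ l₂ : List ℤˣ) (k : ℕ) :
    offset (l₁ ++ l₂) k = offset l₁ k + offset l₂ (k - l₁.length) := by
  simp [offset, List.take_append]

theorem offset_replicate (m : ℕ) (s : ℤˣ) (k : ℕ) :
    offset (List.replicate m s) k = min k m * s := by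
  simp [offset, List.take_replicate, List.sum_replicate]

theorem abs_offset_succ_sub_le (l : List ℤˣ) (k : ℕ) :
    |offset l (k + 1) - offset l k| ≤ 1 := by
  induction l generalizing k with
  | nil => simp
  | cons s l ih =>
    cases k with
    | zero => simp [offset_cons_succ, Int.abs_eq_natAbs]
    | succ k => simpa [offset_cons_succ] using ih k

variable {n : ℕ}

def Visits (l : List ℤˣ) (x r : ZMod n) : Prop :=
  ∃ k ≤ l.length, x + (offset l k : ZMod n) = r

theorem visits_self (l : List ℤˣ) (x : ZMod n) : Visits l x x := ⟨0, Nat.zero_le _, by simp⟩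

theorem visits_nil_iff {x r : ZMod n} : Visits [] x r ↔ x = r := by
  simp [Visits]

theorem visits_cons_iff {s : ℤˣ} {l : List ℤˣ} {x r : ZMod n} :
    Visits (s :: l) x r ↔ x = r ∨ Visits l (x + ((s : ℤ) : ZMod n)) r := by
  constructor
  · rintro ⟨_ | k, hk, rfl⟩
    · simp
    · refine Or.inr ⟨k, by simpa using hk, ?_⟩
      rw [offset_cons_succ]
      push_cast
      ring
  · rintro (rfl | ⟨k, hk, rfl⟩)
    · exact visits_self _ _
    · refine ⟨k + 1, by simpa using hk, ?_⟩
      rw [offset_cons_succ]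
      push_cast
      ring

def sweep (s : ℤˣ) (i m : ℕ) : List ℤˣ := List.replicate i s ++ List.replicate m (-s)

theorem length_sweep (s : ℤˣ) (i m : ℕ) : (sweep s i m).length = i + m := by simp [sweep]

theorem offset_sweep (s : ℤˣ) {i m k : ℕ} (hk : k ≤ m) :
    offset (sweep s i m) (i + k) = ((i : ℤ) - k) * s := by
  simp only [sweep, offset_append, offset_replicate, List.length_replicate, Nat.add_sub_cancel_left,
    Units.val_neg]
  rw [min_eq_right (Nat.le_add_right i k), min_eq_left hk]
  ring

/-- Going `i` steps one way and then `m ≥ n - 1` steps back sweeps `n` consecutive positions. -/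
theorem visits_sweep [NeZero n] (s : ℤˣ) (i : ℕ) {m : ℕ} (hm : n ≤ m + 1) (x r : ZMod n) :
    Visits (sweep s i m) x r := by
  set k := ((s : ℤ) * (x - r) + i : ZMod n).val with hk
  have hkm : k ≤ m := by have := ZMod.val_lt ((s : ℤ) * (x - r) + i : ZMod n); omega
  refine ⟨i + k, by rw [length_sweep]; omega, ?_⟩
  have hs : ((s : ℤ) : ZMod n) * (s : ℤ) = 1 := by
    rw [← Int.cast_mul, ← Units.val_mul, Int.units_mul_self]; simp
  rw [offset_sweep s hkm]
  push_cast
  rw [hk, ZMod.natCast_zmod_val]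
  linear_combination (r - x) * hs

/-- The length of a shortest walk on the cycle `ℤ_n` that visits every position and ends at
distance `farPos n` from its start. -/
def coverLength (n : ℕ) : ℕ := if n = 3 then 3 else n + n / 2 - 2

def farPos (n : ℕ) : ℕ := if n = 3 then 0 else n / 2

theorem exists_sweep (hn : 3 ≤ n) [NeZero n] (d : ZMod n) :
    ∃ (s : ℤˣ) (i m : ℕ), n ≤ m + 1 ∧ i + m ≤ coverLength n ∧
      ((((i : ℤ) - m) * s : ℤ) : ZMod n) = d := by
  -- `d = 0`: one full turn. Otherwise head for `d` along the shorter arc, stop one step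
  -- short, and sweep all the way round the other way to `d`.
  rw [← ZMod.natCast_zmod_val d]
  have hd := ZMod.val_lt d
  obtain h0 | hsmall | hlarge :
      d.val = 0 ∨ (0 < d.val ∧ d.val ≤ n / 2) ∨ n / 2 < d.val := by omega
  · refine ⟨-1, 0, n, by omega, by unfold coverLength; split_ifs <;> omega, ?_⟩
    simp [h0]
  · refine ⟨1, d.val - 1, n - 1, by omega, by unfold coverLength; split_ifs <;> omega, ?_⟩
    push_cast [Nat.cast_sub (by omega : 1 ≤ d.val), Nat.cast_sub (by omega : 1 ≤ n)]
    simp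
  · refine ⟨-1, n - 1 - d.val, n - 1, by omega, by unfold coverLength; split_ifs <;> omega, ?_⟩
    push_cast [Nat.cast_sub (by omega : d.val ≤ n - 1), Nat.cast_sub (by omega : 1 ≤ n)]
    ring

theorem exists_route (hn : 3 ≤ n) [NeZero n] (x y : ZMod n) :
    ∃ l : List ℤˣ, l.length ≤ coverLength n ∧ (∀ r, Visits l x r) ∧
      x + (offset l l.length : ZMod n) = y := by
  obtain ⟨s, i, m, hm, hlen, hend⟩ := exists_sweep hn (y - x)
  refine ⟨sweep s i m, by rwa [length_sweep], visits_sweep s i hm x, ?_⟩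
  rw [length_sweep, offset_sweep s le_rfl, hend]
  ring

theorem coverLength_le_of_intCast_eq_farPos (hn : 3 ≤ n) {L : ℕ} {p : ℤ}
    (hp : (p : ZMod n) = farPos n) (hpL : |p| ≤ L) (hL : 2 * ((n : ℤ) - 1) - |p| ≤ L) :
    coverLength n ≤ L := by
  obtain ⟨c, hc⟩ : (n : ℤ) ∣ p - farPos n := by
    rw [← ZMod.intCast_eq_intCast_iff_dvd_sub]; simpa using hp.symm
  have hfar : 2 * farPos n ≤ n := by unfold farPos; split_ifs <;> omega
  have hpos :
      p = farPos n ∨ p = farPos n - n ∨ farPos n + n ≤ p ∨ p ≤ farPos n - 2 * n := by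
    obtain hc2 | rfl | rfl | hc1 : c ≤ -2 ∨ c = -1 ∨ c = 0 ∨ 1 ≤ c := by omega
    · right; right; right; nlinarith
    · right; left; linarith
    · left; linarith
    · right; right; left; nlinarith
  rw [abs_le] at hpL
  unfold coverLength
  unfold farPos at hfar hpos
  rcases abs_cases p with ⟨hp', -⟩ | ⟨hp', -⟩ <;> rw [hp'] at hL <;>
    split_ifs at hfar hpos ⊢ <;> omega

theorem coverLength_le_length (hn : 3 ≤ n) [NeZero n] {l : List ℤˣ}
    (hvisits : ∀ r, Visits l (0 : ZMod n) r) (hend : (offset l l.length : ZMod n) = farPos n) :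
    coverLength n ≤ l.length := by
  have hstep := abs_offset_succ_sub_le l
  obtain ⟨i, hi, j, hj, hij⟩ := exists_sub_ge_of_forall_intCast_eq (f := offset l)
    fun r => by simpa [Visits] using hvisits r
  have hL := two_mul_sub_sub_abs_le hstep (offset_zero l) hi hj
  have hpL := abs_sub_le_of_abs_succ_sub_le hstep (Nat.zero_le l.length)
  rw [offset_zero, sub_zero, Nat.cast_zero, sub_zero] at hpL
  exact coverLength_le_of_intCast_eq_farPos hn hend hpL (by linarith)

section
variable [NeZero n]

def bitIdx (j : ZMod n) : Fin n := ⟨j.val, j.val_lt⟩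

theorem natCast_eq_iff {k : Fin n} {j : ZMod n} : ((k : ℕ) : ZMod n) = j ↔ k = bitIdx j := by
  constructor
  · rintro rfl
    ext
    simp [bitIdx, ZMod.val_natCast_of_lt k.isLt]
  · rintro rfl
    exact ZMod.natCast_zmod_val j

theorem natCast_sub_one_eq_iff {k : Fin n} {x : ZMod n} :
    ((k : ℕ) : ZMod n) - 1 = x ↔ k = bitIdx (1 + x) := by
  rw [← natCast_eq_iff, sub_eq_iff_eq_add']

theorem Ebasis_eq_single (j : ZMod n) : Ebasis n j = Pi.single (bitIdx j) 1 := by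
  ext k
  simp only [Ebasis, natCast_eq_iff, Pi.single_apply]

end

section
variable [Fact (1 < n)]

theorem adj_iff {p q : (Fin n → ZMod 2) × ZMod n} :
    (CCC n).Adj p q ↔ (∃ s : ℤˣ, q = (p.1, p.2 + ((s : ℤ) : ZMod n))) ∨
      q = (p.1 + Ebasis n (1 + p.2), p.2) := by
  obtain ⟨a, x⟩ := p
  obtain ⟨b, y⟩ := q
  simp only [CCC, SimpleGraph.fromRel_adj, cccRel, ZMod.natCast_zmod_val, Prod.mk.injEq]
  constructor
  · rintro ⟨-, (⟨rfl, rfl⟩ | ⟨rfl, rfl⟩) | (⟨rfl, rfl⟩ | ⟨rfl, h⟩)⟩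
    · exact Or.inl ⟨1, by simp⟩
    · exact Or.inr ⟨rfl, rfl⟩
    · exact Or.inl ⟨-1, by simp⟩
    · refine Or.inr ⟨?_, rfl⟩
      ext k
      simp [h, add_assoc, CharTwo.add_self_eq_zero]
  · rintro (⟨s, rfl, rfl⟩ | ⟨rfl, rfl⟩)
    · rcases Int.units_eq_one_or s with rfl | rfl <;> simp
    · simp [Ebasis_eq_single]

theorem adj_rotate (a : Fin n → ZMod 2) (x : ZMod n) (s : ℤˣ) :
    (CCC n).Adj (a, x) (a, x + ((s : ℤ) : ZMod n)) :=
  adj_iff.2 (Or.inl ⟨s, rfl⟩)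

theorem adj_flip (a : Fin n → ZMod 2) (x : ZMod n) :
    (CCC n).Adj (a, x) (a + Ebasis n (1 + x), x) :=
  adj_iff.2 (Or.inr rfl)

/-- The cursor at `x` sits under bit `1 + x`, i.e. under the bits `k` with `k - 1 = x`. -/
theorem exists_walk_fix_bit (a b : Fin n → ZMod 2) (x : ZMod n) :
    ∃ (a' : Fin n → ZMod 2) (w : (CCC n).Walk (a, x) (a', x)),
      w.length + hammingDist a' b ≤ hammingDist a b ∧
      ∀ k, a' k ≠ b k → a k ≠ b k ∧ (k : ZMod n) - 1 ≠ x := by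
  by_cases h : a (bitIdx (1 + x)) = b (bitIdx (1 + x))
  · refine ⟨a, .nil, by simp, fun k hk => ⟨hk, fun hkx => hk ?_⟩⟩
    rwa [natCast_sub_one_eq_iff.1 hkx]
  · refine ⟨a + Ebasis n (1 + x), .cons (adj_flip a x) .nil, ?_, fun k hk => ?_⟩
    · rw [SimpleGraph.Walk.length_cons, SimpleGraph.Walk.length_nil, Ebasis_eq_single,
        ← hammingDist_add_single_add_one h, zero_add, add_comm]
    · have hne : k ≠ bitIdx (1 + x) := by
        rintro rfl
        apply hk
        simp [Ebasis_eq_single, ZMod.add_one_eq_of_ne h]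
      rw [Ebasis_eq_single, Pi.add_apply, Pi.single_eq_of_ne hne, add_zero] at hk
      exact ⟨hk, fun hkx => hne (natCast_sub_one_eq_iff.1 hkx)⟩

theorem exists_walk_of_forall_visits (b : Fin n → ZMod 2) (l : List ℤˣ) (a : Fin n → ZMod 2)
    (x : ZMod n) (hvisits : ∀ k, a k ≠ b k → Visits l x ((k : ZMod n) - 1)) :
    ∃ w : (CCC n).Walk (a, x) (b, x + (offset l l.length : ZMod n)),
      w.length ≤ l.length + hammingDist a b := by
  induction l generalizing a x with
  | nil =>
    obtain ⟨a', w₁, hw₁, ha'⟩ := exists_walk_fix_bit a b x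
    have : a' = b := by
      funext k
      by_contra hk
      obtain ⟨hab, hkx⟩ := ha' k hk
      exact hkx (visits_nil_iff.1 (hvisits k hab)).symm
    subst this
    exact ⟨w₁.copy rfl (by simp), by simpa using hw₁⟩
  | cons s l ih =>
    obtain ⟨a', w₁, hw₁, ha'⟩ := exists_walk_fix_bit a b x
    have hvisits' : ∀ k, a' k ≠ b k →
        Visits l (x + ((s : ℤ) : ZMod n)) ((k : ZMod n) - 1) := by
      intro k hk
      obtain ⟨hab, hkx⟩ := ha' k hk
      exact (visits_cons_iff.1 (hvisits k hab)).resolve_left (Ne.symm hkx)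
    obtain ⟨w₂, hw₂⟩ := ih a' _ hvisits'
    refine ⟨(w₁.append (.cons (adj_rotate a' x s) w₂)).copy rfl ?_, ?_⟩
    · rw [List.length_cons, offset_cons_succ, Int.cast_add, add_assoc]
    · simp only [SimpleGraph.Walk.length_copy, SimpleGraph.Walk.length_append,
        SimpleGraph.Walk.length_cons, List.length_cons]
      omega

/-- Forgetting the bit flips of a walk leaves a walk on the cycle, which must pass under every
bit in which the endpoints differ. -/
theorem exists_route_of_walk {p q : (Fin n → ZMod 2) × ZMod n} (w : (CCC n).Walk p q) :
    ∃ l : List ℤˣ, p.2 + (offset l l.length : ZMod n) = q.2 ∧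
      (∀ k, p.1 k ≠ q.1 k → Visits l p.2 ((k : ZMod n) - 1)) ∧
      l.length + hammingDist p.1 q.1 ≤ w.length := by
  induction w with
  | nil => exact ⟨[], by simp, fun k hk => (hk rfl).elim, by simp⟩
  | @cons p p' q h w ih =>
    obtain ⟨l, hend, hvisits, hlen⟩ := ih
    rcases adj_iff.1 h with ⟨s, rfl⟩ | rfl
    · refine ⟨s :: l, ?_, fun k hk => visits_cons_iff.2 (Or.inr (hvisits k hk)), ?_⟩
      · rw [List.length_cons, offset_cons_succ, Int.cast_add, ← add_assoc, hend]
      · simp only [List.length_cons, SimpleGraph.Walk.length_cons] at hlen ⊢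
        omega
    · refine ⟨l, hend, fun k hk => ?_, ?_⟩
      · by_cases hkx : (k : ZMod n) - 1 = p.2
        · rw [hkx]
          exact visits_self l p.2
        · apply hvisits
          have hne : k ≠ bitIdx (1 + p.2) := fun h => hkx (natCast_sub_one_eq_iff.2 h)
          dsimp only
          rwa [Ebasis_eq_single, Pi.add_apply, Pi.single_eq_of_ne hne, add_zero]
      · have := hammingDist_le_hammingDist_add_single_add_one p.1 q.1 (bitIdx (1 + p.2))
        rw [← Ebasis_eq_single] at this
        simp only [SimpleGraph.Walk.length_cons] at hlen ⊢
        omega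

end

theorem exists_walk_length_le (hn : 3 ≤ n) (u v : (Fin n → ZMod 2) × ZMod n) :
    ∃ w : (CCC n).Walk u v, w.length ≤ coverLength n + n := by
  have : Fact (1 < n) := ⟨by omega⟩
  obtain ⟨l, hlen, hvisits, hend⟩ := exists_route hn u.2 v.2
  obtain ⟨w, hw⟩ := exists_walk_of_forall_visits v.1 l u.1 u.2 fun k _ => hvisits _
  have hham : hammingDist u.1 v.1 ≤ n := by
    simpa using hammingDist_le_card_fintype (x := u.1) (y := v.1)
  exact ⟨w.copy rfl (by rw [hend]), by rw [SimpleGraph.Walk.length_copy]; omega⟩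

theorem coverLength_add_le_dist (hn : 3 ≤ n) :
    coverLength n + n ≤ (CCC n).dist (0, 0) (1, (farPos n : ZMod n)) := by
  have : Fact (1 < n) := ⟨by omega⟩
  obtain ⟨w₀, -⟩ := exists_walk_length_le hn (0, 0) (1, (farPos n : ZMod n))
  obtain ⟨w, hw⟩ := SimpleGraph.Reachable.exists_walk_length_eq_dist ⟨w₀⟩
  obtain ⟨l, hend, hvisits, hlen⟩ := exists_route_of_walk w
  have hcover : coverLength n ≤ l.length := by
    refine coverLength_le_length hn (fun r => ?_) (by simpa using hend)
    simpa [natCast_sub_one_eq_iff.2 rfl] using hvisits (bitIdx (1 + r)) (by simp)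
  have hham : hammingDist (0 : Fin n → ZMod 2) 1 = n := by simp [hammingDist]
  rw [← hw]
  simp only [hham] at hlen
  omega

end CCC

/-- the diameter of the cube-connected cycles `CC_n` equals
`2n` if `n = 3` and `⌊5n/2⌋ − 2` if `n ≥ 4`. -/
theorem stmt_19 (n : ℕ) (hn : 3 ≤ n) :
    (∀ u v : (Fin n → ZMod 2) × ZMod n,
      (CCC n).dist u v ≤ (if n = 3 then 2 * n else 5 * n / 2 - 2)) ∧
    (∃ u v : (Fin n → ZMod 2) × ZMod n,
      (CCC n).dist u v = (if n = 3 then 2 * n else 5 * n / 2 - 2)) := by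
  have hdiam : (if n = 3 then 2 * n else 5 * n / 2 - 2) = CCC.coverLength n + n := by
    unfold CCC.coverLength
    split_ifs <;> omega
  have hdist_le (u v : (Fin n → ZMod 2) × ZMod n) :
      (CCC n).dist u v ≤ CCC.coverLength n + n := by
    obtain ⟨w, hw⟩ := CCC.exists_walk_length_le hn u v
    exact (SimpleGraph.dist_le w).trans hw
  rw [hdiam]
  exact ⟨hdist_le, _, _, le_antisymm (hdist_le _ _) (CCC.coverLength_add_le_dist hn)⟩
end
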